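/- arXiv:1605.02077 — 3 statements merged into one kernel-verified Lean document; each statement's English description precedes it below -/
import Mathlib

section
/- Let J ⊆ J_f, and define λ_J := max_{j∈J} |λ_j| (0 if J = ∅), λ_{−J} := max_{j ∈ J_f∖J} |λ_j| (0 if J_f∖J = ∅), and Δ_J* := 2·|J|·(max_{j∈J} ‖h_j‖_∞)·(max_{j∈J} |q_jᵀ f|) (0 if J = ∅). Then for every initial probability vector π₀ and every n ∈ ℕ, d_f(π₀ᵀ Pⁿ, π) ≤ Δ_J* · λ_Jⁿ · d_TV(π₀, π) + √( (∑_i π i · (f i)²) / πmin ) · λ_{−J}ⁿ. -/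
open Finset Matrix

lemma aux_col_orth {d : ℕ} (γ : Fin d → Fin d → ℝ)
    (horth : ∀ j k, ∑ i, γ j i * γ k i = if j = k then (1 : ℝ) else 0) :
    ∀ i k, ∑ j, γ j i * γ j k = if i = k then (1 : ℝ) else 0 := by
  have h1 : (Matrix.of γ) * (Matrix.of γ)ᵀ = 1 := by
    ext j k
    simp [Matrix.mul_apply, Matrix.one_apply, horth j k]
  have h2 : (Matrix.of γ)ᵀ * (Matrix.of γ) = 1 := mul_eq_one_comm.mp h1
  intro i k
  have := congrFun (congrFun h2 i) k
  simpa [Matrix.mul_apply, Matrix.one_apply] using this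

lemma aux_parseval {d : ℕ} (γ : Fin d → Fin d → ℝ)
    (hcol : ∀ i k, ∑ j, γ j i * γ j k = if i = k then (1 : ℝ) else 0)
    (u : Fin d → ℝ) :
    ∑ j, (∑ i, u i * γ j i) ^ 2 = ∑ i, u i ^ 2 := by
  have h : ∀ j : Fin d, (∑ i, u i * γ j i) ^ 2
      = ∑ i, ∑ k, (u i * u k) * (γ j i * γ j k) := by
    intro j
    rw [sq, Finset.sum_mul_sum]
    apply Finset.sum_congr rfl; intro i _
    apply Finset.sum_congr rfl; intro k _
    ring
  simp only [h]
  rw [Finset.sum_comm]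
  have h2 : ∀ i : Fin d, ∑ j : Fin d, ∑ k, (u i * u k) * (γ j i * γ j k) = u i ^ 2 := by
    intro i
    rw [Finset.sum_comm]
    have h3 : ∀ k : Fin d, ∑ j : Fin d, (u i * u k) * (γ j i * γ j k)
        = (u i * u k) * (if i = k then (1:ℝ) else 0) := by
      intro k; rw [← Finset.mul_sum, hcol]
    simp only [h3, mul_ite, mul_one, mul_zero]
    simp [sq]
  simp [h2]

lemma aux_spectral {d : ℕ} (P A : Matrix (Fin d) (Fin d) ℝ) (π : Fin d → ℝ)
    (hπpos : ∀ i, 0 < π i)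
    (hA : ∀ i j, A i j = Real.sqrt (π i) * P i j / Real.sqrt (π j))
    (lam : Fin d → ℝ) (γ : Fin d → Fin d → ℝ)
    (horth : ∀ j k, ∑ i, γ j i * γ k i = if j = k then (1 : ℝ) else 0)
    (heig : ∀ j, A.mulVec (γ j) = lam j • γ j) :
    ∀ (n : ℕ) i k, (P ^ n) i k
      = ∑ j, lam j ^ n * (γ j i / Real.sqrt (π i)) * (Real.sqrt (π k) * γ j k) := by
  have hs : ∀ i, Real.sqrt (π i) ≠ 0 := fun i =>
    ne_of_gt (Real.sqrt_pos.mpr (hπpos i))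
  set G : Matrix (Fin d) (Fin d) ℝ := Matrix.of γ with hG
  have h1 : G * Gᵀ = 1 := by
    ext j k; simp [hG, Matrix.mul_apply, Matrix.one_apply, horth j k]
  have h2 : Gᵀ * G = 1 := mul_eq_one_comm.mp h1
  set D : Matrix (Fin d) (Fin d) ℝ := Matrix.diagonal fun i => Real.sqrt (π i) with hD
  set E : Matrix (Fin d) (Fin d) ℝ := Matrix.diagonal fun i => (Real.sqrt (π i))⁻¹ with hE
  have hDE : D * E = 1 := by
    rw [hD, hE, Matrix.diagonal_mul_diagonal]
    rw [show (fun i => Real.sqrt (π i) * (Real.sqrt (π i))⁻¹) = fun _ => (1:ℝ) by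
      funext i; exact mul_inv_cancel₀ (hs i)]
    exact Matrix.diagonal_one
  have hED : E * D = 1 := by
    rw [hD, hE, Matrix.diagonal_mul_diagonal]
    rw [show (fun i => (Real.sqrt (π i))⁻¹ * Real.sqrt (π i)) = fun _ => (1:ℝ) by
      funext i; exact inv_mul_cancel₀ (hs i)]
    exact Matrix.diagonal_one
  have hAG : A * Gᵀ = Gᵀ * Matrix.diagonal lam := by
    ext i j
    have h := congrFun (heig j) i
    simp only [Matrix.mulVec, dotProduct, Pi.smul_apply, smul_eq_mul] at h
    simp [hG, Matrix.mul_apply, Matrix.mul_diagonal, h, Matrix.diagonal, mul_comm]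
  have hAspec : A = Gᵀ * Matrix.diagonal lam * G := by
    calc A = A * (Gᵀ * G) := by rw [h2, Matrix.mul_one]
    _ = (A * Gᵀ) * G := by rw [Matrix.mul_assoc]
    _ = Gᵀ * Matrix.diagonal lam * G := by rw [hAG]
  have hApow : ∀ n : ℕ, A ^ n = Gᵀ * Matrix.diagonal (fun j => lam j ^ n) * G := by
    intro n; induction n with
    | zero => simp [h2]
    | succ n ih =>
      rw [pow_succ, ih, hAspec]
      calc Gᵀ * Matrix.diagonal (fun j => lam j ^ n) * G * (Gᵀ * Matrix.diagonal lam * G)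
          = Gᵀ * Matrix.diagonal (fun j => lam j ^ n) * (G * Gᵀ) * Matrix.diagonal lam * G := by
            simp only [Matrix.mul_assoc]
      _ = Gᵀ * (Matrix.diagonal (fun j => lam j ^ n) * Matrix.diagonal lam) * G := by
            rw [h1]; simp only [Matrix.mul_one, Matrix.mul_assoc]
      _ = Gᵀ * Matrix.diagonal (fun j => lam j ^ (n+1)) * G := by
            simp [Matrix.diagonal_mul_diagonal, pow_succ]
  have hPEAD : P = E * A * D := by
    ext i k
    simp only [hE, hD, Matrix.diagonal_mul, Matrix.mul_diagonal, hA]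
    field_simp
    rw [eq_div_iff (mul_ne_zero (hs i) (hs k))]; ring
  have hPpow : ∀ n : ℕ, P ^ n = E * A ^ n * D := by
    intro n; induction n with
    | zero => simp [hED]
    | succ n ih =>
      rw [pow_succ, ih, hPEAD, pow_succ]
      calc E * A ^ n * D * (E * A * D) = E * A ^ n * (D * E) * A * D := by
            simp only [Matrix.mul_assoc]
      _ = E * (A ^ n * A) * D := by rw [hDE]; simp only [Matrix.mul_one, Matrix.mul_assoc]
  intro n i k
  rw [hPpow n, hApow n]
  simp only [hE, hD, Matrix.diagonal_mul, Matrix.mul_diagonal]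
  rw [Matrix.mul_apply]
  rw [Finset.mul_sum, Finset.sum_mul]
  apply Finset.sum_congr rfl
  intro j _
  simp only [hG, Matrix.mul_diagonal, Matrix.transpose_apply, Matrix.of_apply]
  field_simp



open Finset

noncomputable section MarkovSetup

variable {d : ℕ}

/-- `P` is a transition matrix: nonnegative entries, rows summing to one. -/
def IsTransMat (P : Matrix (Fin d) (Fin d) ℝ) : Prop :=
  (∀ i j, 0 ≤ P i j) ∧ (∀ i, ∑ j, P i j = 1)

/-- Irreducibility of the chain. -/
def IsIrreducibleMat (P : Matrix (Fin d) (Fin d) ℝ) : Prop :=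
  ∀ i j, ∃ n : ℕ, 0 < (P ^ n) i j

/-- Aperiodicity of the chain (for each state, eventually positive return probabilities). -/
def IsAperiodicMat (P : Matrix (Fin d) (Fin d) ℝ) : Prop :=
  ∀ i, ∃ N : ℕ, ∀ n, N ≤ n → 0 < (P ^ n) i i

/-- A probability vector. -/
def IsProbVec (p : Fin d → ℝ) : Prop := (∀ i, 0 ≤ p i) ∧ ∑ i, p i = 1

/-- `π` is the stationary distribution of `P`, with strictly positive entries. -/
def IsStationaryDist (P : Matrix (Fin d) (Fin d) ℝ) (π : Fin d → ℝ) : Prop :=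
  (∀ i, 0 < π i) ∧ (∑ i, π i = 1) ∧ (∀ j, ∑ i, π i * P i j = π j)

/-- Reversibility of `P` with respect to `π`. -/
def IsReversibleMat (P : Matrix (Fin d) (Fin d) ℝ) (π : Fin d → ℝ) : Prop :=
  ∀ i j, π i * P i j = π j * P j i

/-- The `f`-discrepancy `d_f(p, q) = |∑ᵢ pᵢ fᵢ − ∑ᵢ qᵢ fᵢ|`. -/
def fDisc (f p q : Fin d → ℝ) : ℝ := |∑ i, p i * f i - ∑ i, q i * f i|

/-- The `f`-mixing time `T_f(δ) = min {n ≥ 1 : ∀ i, d_f(δᵢᵀ Pⁿ, π) ≤ δ}`. -/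
def fMixTime (P : Matrix (Fin d) (Fin d) ℝ) (π f : Fin d → ℝ) (δ : ℝ) : ℕ :=
  sInf {n : ℕ | 1 ≤ n ∧ ∀ i, fDisc f (fun j => (P ^ n) i j) π ≤ δ}

/-- Total variation distance between probability vectors. -/
def tvDist (p q : Fin d → ℝ) : ℝ := (1 / 2) * ∑ i, |p i - q i|

/-- Mass of a trajectory `(X₀, …, X_N)` under the chain `P` started from `π₀`. -/
def pathMass (P : Matrix (Fin d) (Fin d) ℝ) (π₀ : Fin d → ℝ) (N : ℕ)
    (x : Fin (N + 1) → Fin d) : ℝ :=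
  π₀ (x 0) * ∏ n : Fin N, P (x n.castSucc) (x n.succ)

open scoped Classical in
/-- Probability of an event under the trajectory law of `(X₀, …, X_N)`. -/
def pathProb (P : Matrix (Fin d) (Fin d) ℝ) (π₀ : Fin d → ℝ) (N : ℕ)
    (E : (Fin (N + 1) → Fin d) → Prop) : ℝ :=
  ∑ x : Fin (N + 1) → Fin d, if E x then pathMass P π₀ N x else 0

/-- Expectation of a functional of the trajectory `(X₀, …, X_N)`. -/
def pathExp (P : Matrix (Fin d) (Fin d) ℝ) (π₀ : Fin d → ℝ) (N : ℕ)
    (g : (Fin (N + 1) → Fin d) → ℝ) : ℝ :=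
  ∑ x : Fin (N + 1) → Fin d, pathMass P π₀ N x * g x

end MarkovSetup

/-- sharper `f`-discrepancy bound (Lemma `lem:mix-gap-all`). -/
theorem f_disc_sharper_bound
    {d : ℕ} (hd : 0 < d)
    (P : Matrix (Fin d) (Fin d) ℝ) (π f : Fin d → ℝ)
    (hP : IsTransMat P) (hirr : IsIrreducibleMat P) (haper : IsAperiodicMat P)
    (hπ : IsStationaryDist P π) (hrev : IsReversibleMat P π)
    (hf : ∀ i, f i ∈ Set.Icc (0 : ℝ) 1)
    (πmin : ℝ) (hπmin : πmin = Finset.univ.inf' ⟨⟨0, hd⟩, Finset.mem_univ _⟩ π)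
    (A : Matrix (Fin d) (Fin d) ℝ)
    (hA : ∀ i j, A i j = Real.sqrt (π i) * P i j / Real.sqrt (π j))
    (lam : Fin d → ℝ) (γ : Fin d → Fin d → ℝ)
    (horth : ∀ j k, ∑ i, γ j i * γ k i = if j = k then (1 : ℝ) else 0)
    (heig : ∀ j, A.mulVec (γ j) = lam j • γ j)
    (hlam0 : lam ⟨0, hd⟩ = 1) (hmono : ∀ j k : Fin d, j ≤ k → lam k ≤ lam j)
    (hlt1 : ∀ j : Fin d, j ≠ ⟨0, hd⟩ → lam j < 1) (hgtm1 : ∀ j, (-1 : ℝ) < lam j)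
    (hγ0 : ∀ i, γ ⟨0, hd⟩ i = Real.sqrt (π i))
    (q : Fin d → Fin d → ℝ) (hq : ∀ j i, q j i = Real.sqrt (π i) * γ j i)
    (hv : Fin d → Fin d → ℝ) (hhv : ∀ j i, hv j i = γ j i / Real.sqrt (π i))
    (Jf : Finset (Fin d))
    (hJf : ∀ j, j ∈ Jf ↔ (j ≠ ⟨0, hd⟩ ∧ ∑ i, q j i * f i ≠ 0))
    (J : Finset (Fin d)) (hJsub : J ⊆ Jf)
    (lamJ : ℝ)
    (hlamJ : lamJ = if hne : J.Nonempty then J.sup' hne (fun j => |lam j|) else 0)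
    (lamNegJ : ℝ)
    (hlamNegJ : lamNegJ =
      if hne : (Jf \ J).Nonempty then (Jf \ J).sup' hne (fun j => |lam j|) else 0)
    (ΔJstar : ℝ)
    (hΔJstar : ΔJstar = if hne : J.Nonempty then
        2 * (J.card : ℝ) *
          (J.sup' hne fun j => Finset.univ.sup' ⟨⟨0, hd⟩, Finset.mem_univ _⟩ fun i => |hv j i|) *
          (J.sup' hne fun j => |∑ i, q j i * f i|)
      else 0) :
    ∀ π₀ : Fin d → ℝ, IsProbVec π₀ → ∀ n : ℕ,
      fDisc f (Matrix.vecMul π₀ (P ^ n)) π ≤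
        ΔJstar * lamJ ^ n * tvDist π₀ π +
          Real.sqrt ((∑ i, π i * f i ^ 2) / πmin) * lamNegJ ^ n := by
  obtain ⟨hπpos, hπsum, hπstat⟩ := hπ
  have hs : ∀ i, Real.sqrt (π i) ≠ 0 := fun i => ne_of_gt (Real.sqrt_pos.mpr (hπpos i))
  have hπminpos : 0 < πmin := by
    rw [hπmin]; exact (Finset.lt_inf'_iff _).mpr fun i _ => hπpos i
  have hπminle : ∀ i, πmin ≤ π i := by
    intro i; rw [hπmin]; exact Finset.inf'_le _ (Finset.mem_univ i)
  intro π₀ hπ₀ n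
  obtain ⟨hπ₀nn, hπ₀sum⟩ := hπ₀
  have hπ0le1 : ∀ i, π₀ i ≤ 1 := by
    intro i; rw [← hπ₀sum]
    exact Finset.single_le_sum (fun i _ => hπ₀nn i) (Finset.mem_univ i)
  have htvnn : 0 ≤ tvDist π₀ π := by
    simp only [tvDist]; positivity
  have htv : ∑ i, |π₀ i - π i| = 2 * tvDist π₀ π := by
    simp only [tvDist]; ring
  obtain ⟨c, hc⟩ : ∃ c : Fin d → ℝ, c = fun j => ∑ i, π₀ i * hv j i := ⟨_, rfl⟩
  obtain ⟨b, hb⟩ : ∃ b : Fin d → ℝ, b = fun j => ∑ i, q j i * f i := ⟨_, rfl⟩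
  obtain ⟨g, hg⟩ : ∃ g : Fin d → ℝ, g = fun j => lam j ^ n * c j * b j := ⟨_, rfl⟩
  have hPn : ∀ (m : ℕ) i k, (P ^ m) i k = ∑ j, lam j ^ m * hv j i * q j k := by
    intro m i k
    rw [aux_spectral P A π hπpos hA lam γ horth heig m i k]
    exact Finset.sum_congr rfl fun j _ => by rw [hhv j i, hq j k]
  have hvec : ∀ k, Matrix.vecMul π₀ (P ^ n) k = ∑ j, lam j ^ n * c j * q j k := by
    intro k
    have h0 : Matrix.vecMul π₀ (P ^ n) k = ∑ i, π₀ i * (P ^ n) i k := by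
      simp [Matrix.vecMul, dotProduct]
    rw [h0]
    calc ∑ i, π₀ i * (P ^ n) i k
        = ∑ i, ∑ j, π₀ i * (lam j ^ n * hv j i * q j k) := by
          exact Finset.sum_congr rfl fun i _ => by rw [hPn n i k, Finset.mul_sum]
      _ = ∑ j, ∑ i, π₀ i * (lam j ^ n * hv j i * q j k) := Finset.sum_comm
      _ = ∑ j, lam j ^ n * c j * q j k := by
          apply Finset.sum_congr rfl; intro j _
          simp only [hc]
          rw [Finset.mul_sum, Finset.sum_mul]
          exact Finset.sum_congr rfl fun i _ => by ring
  have key : ∑ k, Matrix.vecMul π₀ (P ^ n) k * f k = ∑ j, g j := by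
    calc ∑ k, Matrix.vecMul π₀ (P ^ n) k * f k
        = ∑ k, (∑ j, lam j ^ n * c j * q j k) * f k :=
          Finset.sum_congr rfl fun k _ => by rw [hvec k]
      _ = ∑ k, ∑ j, lam j ^ n * c j * q j k * f k := by simp only [Finset.sum_mul]
      _ = ∑ j, ∑ k, lam j ^ n * c j * q j k * f k := Finset.sum_comm
      _ = ∑ j, g j := by
          apply Finset.sum_congr rfl; intro j _
          simp only [hg, hb]
          rw [Finset.mul_sum]
          exact Finset.sum_congr rfl fun k _ => by ring
  have hc0 : c ⟨0, hd⟩ = 1 := by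
    simp only [hc]
    have h1 : ∀ i, π₀ i * hv ⟨0, hd⟩ i = π₀ i := by
      intro i; rw [hhv, hγ0, div_self (hs i), mul_one]
    simp only [h1]; exact hπ₀sum
  have hb0 : b ⟨0, hd⟩ = ∑ i, π i * f i := by
    simp only [hb]
    apply Finset.sum_congr rfl; intro i _
    rw [hq, hγ0, Real.mul_self_sqrt (hπpos i).le]
  have hcz : ∀ j, j ≠ ⟨0, hd⟩ → c j = ∑ i, (π₀ i - π i) * hv j i := by
    intro j hj
    have hπc : ∑ i, π i * hv j i = 0 := by
      have he : ∀ i, π i * hv j i = γ ⟨0, hd⟩ i * γ j i := by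
        intro i
        rw [hhv, hγ0]
        calc π i * (γ j i / Real.sqrt (π i)) = π i / Real.sqrt (π i) * γ j i := by ring
          _ = Real.sqrt (π i) * γ j i := by rw [Real.div_sqrt]
      calc ∑ i, π i * hv j i = ∑ i, γ ⟨0, hd⟩ i * γ j i :=
            Finset.sum_congr rfl fun i _ => he i
        _ = 0 := by rw [horth, if_neg (Ne.symm hj)]
    simp only [hc]
    rw [← sub_zero (∑ i, π₀ i * hv j i), ← hπc, ← Finset.sum_sub_distrib]
    exact Finset.sum_congr rfl fun i _ => by ring
  have hbz : ∀ j, j ≠ ⟨0, hd⟩ → j ∉ Jf → b j = 0 := by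
    intro j hj hnj
    by_contra hbne
    exact hnj ((hJf j).mpr ⟨hj, by simpa [hb] using hbne⟩)
  have hsum0 : ∑ j, g j = (∑ i, π i * f i) + ∑ j ∈ Finset.univ.erase ⟨0, hd⟩, g j := by
    rw [← Finset.add_sum_erase _ g (Finset.mem_univ ⟨0, hd⟩)]
    congr 1
    simp [hg, hc0, hb0, hlam0]
  have herase : ∑ j ∈ Finset.univ.erase ⟨0, hd⟩, g j = ∑ j ∈ Jf, g j := by
    symm
    apply Finset.sum_subset
    · exact fun j hj => Finset.mem_erase.mpr ⟨((hJf j).mp hj).1, Finset.mem_univ j⟩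
    · intro j hj hnj
      have hj0 : j ≠ ⟨0, hd⟩ := (Finset.mem_erase.mp hj).1
      simp [hg, hbz j hj0 hnj]
  have hfinal : fDisc f (Matrix.vecMul π₀ (P ^ n)) π
      = |∑ j ∈ J, g j + ∑ j ∈ Jf \ J, g j| := by
    simp only [fDisc]
    rw [key, hsum0, herase, ← Finset.sum_sdiff hJsub]
    congr 1
    ring
  -- Parseval bounds
  have hcolo := aux_col_orth γ horth
  have hC2 : ∑ j, c j ^ 2 ≤ 1 / πmin := by
    have hcform : ∀ j, c j = ∑ i, (π₀ i / Real.sqrt (π i)) * γ j i := by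
      intro j; simp only [hc]
      exact Finset.sum_congr rfl fun i _ => by rw [hhv]; ring
    have hp := aux_parseval γ hcolo (fun i => π₀ i / Real.sqrt (π i))
    calc ∑ j, c j ^ 2 = ∑ i, (π₀ i / Real.sqrt (π i)) ^ 2 := by
          rw [← hp]; exact Finset.sum_congr rfl fun j _ => by rw [hcform j]
      _ = ∑ i, π₀ i ^ 2 / π i :=
          Finset.sum_congr rfl fun i _ => by rw [div_pow, Real.sq_sqrt (hπpos i).le]
      _ ≤ ∑ i, π₀ i * (1 / πmin) := by
          apply Finset.sum_le_sum; intro i _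
          have h1 : π₀ i ^ 2 / π i = π₀ i * (π₀ i / π i) := by ring
          rw [h1]
          exact mul_le_mul_of_nonneg_left
            (div_le_div₀ zero_le_one (hπ0le1 i) hπminpos (hπminle i)) (hπ₀nn i)
      _ = 1 / πmin := by rw [← Finset.sum_mul, hπ₀sum, one_mul]
  have hB2 : ∑ j, b j ^ 2 = ∑ i, π i * f i ^ 2 := by
    have hbform : ∀ j, b j = ∑ i, (Real.sqrt (π i) * f i) * γ j i := by
      intro j; simp only [hb]
      exact Finset.sum_congr rfl fun i _ => by rw [hq]; ring
    have hp := aux_parseval γ hcolo (fun i => Real.sqrt (π i) * f i)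
    calc ∑ j, b j ^ 2 = ∑ i, (Real.sqrt (π i) * f i) ^ 2 := by
          rw [← hp]; exact Finset.sum_congr rfl fun j _ => by rw [hbform j]
      _ = ∑ i, π i * f i ^ 2 :=
          Finset.sum_congr rfl fun i _ => by rw [mul_pow, Real.sq_sqrt (hπpos i).le]
  -- bound on the J part
  have hBJ : |∑ j ∈ J, g j| ≤ ΔJstar * lamJ ^ n * tvDist π₀ π := by
    by_cases hne : J.Nonempty
    · have hlJ : lamJ = J.sup' hne fun j => |lam j| := by rw [hlamJ, dif_pos hne]
      obtain ⟨j0, hj0⟩ := id hne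
      set H := J.sup' hne fun j =>
        Finset.univ.sup' ⟨⟨0, hd⟩, Finset.mem_univ _⟩ fun i => |hv j i| with hH
      set B := J.sup' hne fun j => |∑ i, q j i * f i| with hB'
      have hΔ : ΔJstar = 2 * (J.card : ℝ) * H * B := by rw [hΔJstar, dif_pos hne]
      have hHnn : 0 ≤ H := by
        rw [hH]
        refine le_trans ?_ (Finset.le_sup'
          (fun j => Finset.univ.sup' ⟨⟨0, hd⟩, Finset.mem_univ _⟩ fun i => |hv j i|) hj0)
        exact le_trans (abs_nonneg _)
          (Finset.le_sup' (fun i => |hv j0 i|) (Finset.mem_univ ⟨0, hd⟩))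
      have hlnn : 0 ≤ lamJ := by
        rw [hlJ]; exact le_trans (abs_nonneg (lam j0)) (Finset.le_sup' (fun j => |lam j|) hj0)
      have hBb : ∀ j ∈ J, |b j| ≤ B := by
        intro j hj
        have : |b j| = |∑ i, q j i * f i| := by simp [hb]
        rw [this, hB']
        exact Finset.le_sup' (fun j => |∑ i, q j i * f i|) hj
      have hper : ∀ j ∈ J, |g j| ≤ lamJ ^ n * (H * (2 * tvDist π₀ π)) * B := by
        intro j hj
        have hj0' : j ≠ ⟨0, hd⟩ := ((hJf j).mp (hJsub hj)).1
        have hcj : |c j| ≤ H * (2 * tvDist π₀ π) := by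
          rw [hcz j hj0']
          calc |∑ i, (π₀ i - π i) * hv j i| ≤ ∑ i, |(π₀ i - π i) * hv j i| :=
                Finset.abs_sum_le_sum_abs _ _
            _ ≤ ∑ i, |π₀ i - π i| * H := by
                apply Finset.sum_le_sum; intro i _
                rw [abs_mul]
                apply mul_le_mul_of_nonneg_left _ (abs_nonneg _)
                calc |hv j i| ≤ Finset.univ.sup' ⟨⟨0, hd⟩, Finset.mem_univ _⟩
                      (fun i => |hv j i|) := Finset.le_sup' (fun i => |hv j i|) (Finset.mem_univ i)
                  _ ≤ H := by
                      rw [hH]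
                      exact Finset.le_sup'
                        (fun j => Finset.univ.sup' ⟨⟨0, hd⟩, Finset.mem_univ _⟩ fun i => |hv j i|) hj
            _ = H * (2 * tvDist π₀ π) := by rw [← Finset.sum_mul, htv, mul_comm]
        have hlj : |lam j| ^ n ≤ lamJ ^ n := by
          apply pow_le_pow_left₀ (abs_nonneg _) _ n
          rw [hlJ]; exact Finset.le_sup' (fun j => |lam j|) hj
        have habs : |g j| = |lam j| ^ n * |c j| * |b j| := by
          simp [hg, abs_mul, abs_pow]
        rw [habs]
        apply mul_le_mul _ (hBb j hj) (abs_nonneg _)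
          (mul_nonneg (pow_nonneg hlnn n)
            (mul_nonneg hHnn (by linarith [htvnn])))
        exact mul_le_mul hlj hcj (abs_nonneg _) (pow_nonneg hlnn n)
      calc |∑ j ∈ J, g j| ≤ ∑ j ∈ J, |g j| := Finset.abs_sum_le_sum_abs _ _
        _ ≤ ∑ _j ∈ J, lamJ ^ n * (H * (2 * tvDist π₀ π)) * B := Finset.sum_le_sum hper
        _ = (J.card : ℝ) * (lamJ ^ n * (H * (2 * tvDist π₀ π)) * B) := by
            rw [Finset.sum_const, nsmul_eq_mul]
        _ = ΔJstar * lamJ ^ n * tvDist π₀ π := by rw [hΔ]; ring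
    · have hJe : J = ∅ := Finset.not_nonempty_iff_eq_empty.mp hne
      rw [hJe, Finset.sum_empty, hΔJstar, dif_neg hne]
      simp
  -- bound on the complementary part
  have hBneg : |∑ j ∈ Jf \ J, g j| ≤
      Real.sqrt ((∑ i, π i * f i ^ 2) / πmin) * lamNegJ ^ n := by
    by_cases hne : (Jf \ J).Nonempty
    · have hl : lamNegJ = (Jf \ J).sup' hne fun j => |lam j| := by
        rw [hlamNegJ, dif_pos hne]
      obtain ⟨j0, hj0⟩ := id hne
      have hlnn : 0 ≤ lamNegJ := by
        rw [hl]; exact le_trans (abs_nonneg (lam j0)) (Finset.le_sup' (fun j => |lam j|) hj0)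
      have hstep1 : |∑ j ∈ Jf \ J, g j| ≤ lamNegJ ^ n * ∑ j ∈ Jf \ J, |c j| * |b j| := by
        calc |∑ j ∈ Jf \ J, g j| ≤ ∑ j ∈ Jf \ J, |g j| := Finset.abs_sum_le_sum_abs _ _
          _ ≤ ∑ j ∈ Jf \ J, lamNegJ ^ n * (|c j| * |b j|) := by
              apply Finset.sum_le_sum; intro j hj
              have habs : |g j| = |lam j| ^ n * (|c j| * |b j|) := by
                simp [hg, abs_mul, abs_pow, mul_assoc]
              rw [habs]
              apply mul_le_mul_of_nonneg_right _ (mul_nonneg (abs_nonneg _) (abs_nonneg _))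
              apply pow_le_pow_left₀ (abs_nonneg _) _ n
              rw [hl]; exact Finset.le_sup' (fun j => |lam j|) hj
          _ = lamNegJ ^ n * ∑ j ∈ Jf \ J, |c j| * |b j| := (Finset.mul_sum _ _ _).symm
      have hCS : (∑ j ∈ Jf \ J, |c j| * |b j|) ≤
          Real.sqrt ((∑ i, π i * f i ^ 2) / πmin) := by
        have h1 : (∑ j ∈ Jf \ J, |c j| * |b j|) ^ 2 ≤
            (∑ j ∈ Jf \ J, c j ^ 2) * (∑ j ∈ Jf \ J, b j ^ 2) := by
          have := Finset.sum_mul_sq_le_sq_mul_sq (Jf \ J) (fun j => |c j|) (fun j => |b j|)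
          simpa [sq_abs] using this
        have h2 : ∑ j ∈ Jf \ J, c j ^ 2 ≤ 1 / πmin :=
          le_trans (Finset.sum_le_sum_of_subset_of_nonneg (Finset.subset_univ _)
            fun j _ _ => sq_nonneg _) hC2
        have h3 : ∑ j ∈ Jf \ J, b j ^ 2 ≤ ∑ i, π i * f i ^ 2 :=
          le_trans (Finset.sum_le_sum_of_subset_of_nonneg (Finset.subset_univ _)
            fun j _ _ => sq_nonneg _) (le_of_eq hB2)
        have h4 : (∑ j ∈ Jf \ J, |c j| * |b j|) ^ 2 ≤ (∑ i, π i * f i ^ 2) / πmin := by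
          calc (∑ j ∈ Jf \ J, |c j| * |b j|) ^ 2
              ≤ (∑ j ∈ Jf \ J, c j ^ 2) * (∑ j ∈ Jf \ J, b j ^ 2) := h1
            _ ≤ (1 / πmin) * (∑ i, π i * f i ^ 2) := by
                apply mul_le_mul h2 h3 (Finset.sum_nonneg fun j _ => sq_nonneg _)
                positivity
            _ = (∑ i, π i * f i ^ 2) / πmin := by ring
        have h5 : 0 ≤ ∑ j ∈ Jf \ J, |c j| * |b j| :=
          Finset.sum_nonneg fun j _ => mul_nonneg (abs_nonneg _) (abs_nonneg _)
        calc ∑ j ∈ Jf \ J, |c j| * |b j|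
            = Real.sqrt ((∑ j ∈ Jf \ J, |c j| * |b j|) ^ 2) := (Real.sqrt_sq h5).symm
          _ ≤ Real.sqrt ((∑ i, π i * f i ^ 2) / πmin) := Real.sqrt_le_sqrt h4
      calc |∑ j ∈ Jf \ J, g j| ≤ lamNegJ ^ n * ∑ j ∈ Jf \ J, |c j| * |b j| := hstep1
        _ ≤ lamNegJ ^ n * Real.sqrt ((∑ i, π i * f i ^ 2) / πmin) :=
            mul_le_mul_of_nonneg_left hCS (pow_nonneg hlnn n)
        _ = Real.sqrt ((∑ i, π i * f i ^ 2) / πmin) * lamNegJ ^ n := mul_comm _ _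
    · rw [Finset.not_nonempty_iff_eq_empty.mp hne, Finset.sum_empty, abs_zero]
      have hl0 : (0:ℝ) ≤ lamNegJ := by rw [hlamNegJ, dif_neg hne]
      exact mul_nonneg (Real.sqrt_nonneg _) (pow_nonneg hl0 n)
  rw [hfinal]
  calc |∑ j ∈ J, g j + ∑ j ∈ Jf \ J, g j|
      ≤ |∑ j ∈ J, g j| + |∑ j ∈ Jf \ J, g j| := abs_add_le _ _
    _ ≤ _ := add_le_add hBJ hBneg
end

section
/- Fix α ∈ (0,1) and define r_N(ε) := ε² · ( N / T_f(ε/2) − 1 ) for ε > 0. Let ε_N > 0 satisfy r_N(ε_N) ≥ 8·log(2/α), set T := T_f(ε_N/2), and suppose N > T and that T divides N − T. Then for every initial probability vector π₀, setting μ̂ := (1/(N−T)) · ∑_{n=T+1}^{N} f(X_n), the chain started from π₀ satisfies P( μ − ε_N ≤ μ̂ ≤ μ + ε_N ) ≥ 1 − α; that is, [μ̂ − ε_N, μ̂ + ε_N] is a (1−α)-confidence interval for μ. -/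
open Finset

noncomputable section AuxProofs


namespace AdaptiveCI

variable {d : ℕ}

lemma isTransMat_pow {P : Matrix (Fin d) (Fin d) ℝ} (hP : IsTransMat P) (k : ℕ) :
    IsTransMat (P ^ k) := by
  induction k with
  | zero =>
      refine ⟨fun i j => ?_, fun i => ?_⟩
      · by_cases h : i = j <;> simp [Matrix.one_apply, h]
      · simp [Matrix.one_apply]
  | succ k ih =>
      refine ⟨fun i j => ?_, fun i => ?_⟩
      · rw [pow_succ, Matrix.mul_apply]
        exact Finset.sum_nonneg fun l _ => mul_nonneg (ih.1 i l) (hP.1 l j)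
      · rw [pow_succ]
        simp only [Matrix.mul_apply]
        rw [Finset.sum_comm]
        calc ∑ l, ∑ j, (P ^ k) i l * P l j
            = ∑ l, (P ^ k) i l * ∑ j, P l j := by
              simp [Finset.mul_sum]
          _ = 1 := by simp [hP.2, ih.2 i]

/-- The weighted distribution flow of the chain. -/
def flow (P : Matrix (Fin d) (Fin d) ℝ) (π₀ : Fin d → ℝ) (h : ℕ → Fin d → ℝ) :
    ℕ → Fin d → ℝ
  | 0 => fun i => π₀ i * h 0 i
  | (k+1) => fun j => (∑ i, flow P π₀ h k i * P i j) * h (k+1) j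

lemma flow_nonneg {P : Matrix (Fin d) (Fin d) ℝ} {π₀ : Fin d → ℝ} {h : ℕ → Fin d → ℝ}
    (hP : ∀ i j, 0 ≤ P i j) (hπ₀ : ∀ i, 0 ≤ π₀ i) (hh : ∀ n i, 0 ≤ h n i) :
    ∀ k i, 0 ≤ flow P π₀ h k i := by
  intro k
  induction k with
  | zero => intro i; exact mul_nonneg (hπ₀ i) (hh 0 i)
  | succ k ih =>
      intro j
      exact mul_nonneg (Finset.sum_nonneg fun l _ => mul_nonneg (ih l) (hP l j)) (hh _ j)

/-- Between times where `h` is trivial, the flow is given by matrix powers. -/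
lemma flow_const_steps {P : Matrix (Fin d) (Fin d) ℝ} {π₀ : Fin d → ℝ} {h : ℕ → Fin d → ℝ}
    (a : ℕ) (k : ℕ) (hh : ∀ r, a < r → r ≤ a + k → h r = fun _ => 1) :
    ∀ j, flow P π₀ h (a + k) j = ∑ i, flow P π₀ h a i * (P ^ k) i j := by
  induction k with
  | zero =>
      intro j
      simp [Matrix.one_apply, Finset.sum_ite_eq' (Finset.univ : Finset (Fin d))]
  | succ k ih =>
      intro j
      have hstep : flow P π₀ h (a + (k+1)) j
          = (∑ i, flow P π₀ h (a + k) i * P i j) * h (a + k + 1) j := by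
        show flow P π₀ h ((a + k) + 1) j = _
        rfl
      have h1 : h (a + k + 1) = fun _ => 1 := hh _ (by omega) (by omega)
      rw [hstep, h1]
      have ihk : ∀ i, flow P π₀ h (a + k) i = ∑ l, flow P π₀ h a l * (P ^ k) l i :=
        ih (fun r hr hr' => hh r hr (by omega))
      simp only [ihk, pow_succ, Matrix.mul_apply, mul_one]
      rw [Finset.sum_congr rfl (fun x _ => Finset.sum_mul ..), Finset.sum_comm]
      exact Finset.sum_congr rfl fun l _ => by rw [Finset.mul_sum]; exact Finset.sum_congr rfl fun i _ => by ring

end AdaptiveCI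
namespace AdaptiveCI
variable {d : ℕ}

lemma pathMass_snoc (P : Matrix (Fin d) (Fin d) ℝ) (π₀ : Fin d → ℝ) (N : ℕ)
    (y : Fin (N + 1) → Fin d) (j : Fin d) :
    pathMass P π₀ (N + 1) (Fin.snoc y j) = pathMass P π₀ N y * P (y (Fin.last N)) j := by
  unfold pathMass
  have h0 : (Fin.snoc y j : Fin (N + 2) → Fin d) 0 = y 0 := by
    rw [show (0 : Fin (N + 2)) = Fin.castSucc 0 by simp, Fin.snoc_castSucc]
  rw [Fin.prod_univ_castSucc (fun n : Fin (N + 1) =>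
    P ((Fin.snoc y j : Fin (N+2) → Fin d) n.castSucc) ((Fin.snoc y j : Fin (N+2) → Fin d) n.succ))]
  have hlast : P ((Fin.snoc y j : Fin (N+2) → Fin d) (Fin.last N).castSucc)
      ((Fin.snoc y j : Fin (N+2) → Fin d) (Fin.last N).succ) = P (y (Fin.last N)) j := by
    rw [Fin.snoc_castSucc, Fin.succ_last, Fin.snoc_last]
  have hmid : ∀ n : Fin N,
      P ((Fin.snoc y j : Fin (N+2) → Fin d) (n.castSucc).castSucc)
        ((Fin.snoc y j : Fin (N+2) → Fin d) (n.castSucc).succ)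
      = P (y n.castSucc) (y n.succ) := by
    intro n
    rw [Fin.snoc_castSucc, Fin.succ_castSucc, Fin.snoc_castSucc]
  rw [h0, hlast]
  rw [Finset.prod_congr rfl fun n _ => hmid n]
  ring

/-- Workhorse: expectations of products along the path are computed by the flow. -/
lemma pathSum_prod (P : Matrix (Fin d) (Fin d) ℝ) :
    ∀ (N : ℕ) (π₀ : Fin d → ℝ) (h : ℕ → Fin d → ℝ) (g : Fin d → ℝ),
    ∑ x : Fin (N + 1) → Fin d,
      pathMass P π₀ N x * ((∏ n : Fin (N + 1), h (n : ℕ) (x n)) * g (x (Fin.last N)))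
    = ∑ i, flow P π₀ h N i * g i := by
  intro N
  induction N with
  | zero =>
      intro π₀ h g
      rw [← (Equiv.funUnique (Fin 1) (Fin d)).symm.sum_comp]
      simp [pathMass, flow, Equiv.funUnique]
      exact Finset.sum_congr rfl fun i _ => by ring
  | succ N ih =>
      intro π₀ h g
      rw [← ((Fin.snocEquiv (fun _ : Fin (N+2) => Fin d)).sum_comp
        (fun x => pathMass P π₀ (N+1) x *
          ((∏ n : Fin (N + 2), h (n : ℕ) (x n)) * g (x (Fin.last (N+1))))))]
      rw [Fintype.sum_prod_type]
      have key : ∀ (j : Fin d) (y : Fin (N+1) → Fin d),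
          pathMass P π₀ (N+1) (Fin.snoc y j) *
            ((∏ n : Fin (N + 2), h (n : ℕ) ((Fin.snoc y j : Fin (N+2) → Fin d) n)) *
              g ((Fin.snoc y j : Fin (N+2) → Fin d) (Fin.last (N+1))))
          = pathMass P π₀ N y *
              ((∏ n : Fin (N + 1), h (n : ℕ) (y n)) * P (y (Fin.last N)) j)
            * (h (N+1) j * g j) := by
        intro j y
        rw [pathMass_snoc]
        rw [Fin.prod_univ_castSucc (fun n : Fin (N + 2) =>
          h (n : ℕ) ((Fin.snoc y j : Fin (N+2) → Fin d) n))]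
        rw [Fin.snoc_last]
        have : ∀ n : Fin (N+1),
            h ((n.castSucc : Fin (N+2)) : ℕ) ((Fin.snoc y j : Fin (N+2) → Fin d) n.castSucc)
            = h (n : ℕ) (y n) := by
          intro n
          rw [Fin.snoc_castSucc, Fin.coe_castSucc]
        rw [Finset.prod_congr rfl fun n _ => this n]
        simp [Fin.val_last]
        ring
      have hsnoc : ∀ (p : Fin d × (Fin (N+1) → Fin d)),
          (Fin.snocEquiv (fun _ : Fin (N+2) => Fin d)) p = Fin.snoc p.2 p.1 := fun p => rfl
      simp only [hsnoc]
      calc ∑ j : Fin d, ∑ y : Fin (N+1) → Fin d,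
              pathMass P π₀ (N+1) (Fin.snoc y j) *
                ((∏ n : Fin (N + 2), h (n : ℕ) ((Fin.snoc y j : Fin (N+2) → Fin d) n)) *
                  g ((Fin.snoc y j : Fin (N+2) → Fin d) (Fin.last (N+1))))
          = ∑ j : Fin d, ∑ y : Fin (N+1) → Fin d,
              pathMass P π₀ N y *
                ((∏ n : Fin (N + 1), h (n : ℕ) (y n)) * P (y (Fin.last N)) j)
              * (h (N+1) j * g j) := by
            exact Finset.sum_congr rfl fun j _ => Finset.sum_congr rfl fun y _ => key j y
        _ = ∑ j : Fin d, (∑ i, flow P π₀ h N i * P i j) * (h (N+1) j * g j) := by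
            refine Finset.sum_congr rfl fun j _ => ?_
            rw [← Finset.sum_mul, ih π₀ h (fun i => P i j)]
        _ = ∑ j, flow P π₀ h (N+1) j * g j := by
            refine Finset.sum_congr rfl fun j _ => ?_
            show _ = (∑ i, flow P π₀ h N i * P i j) * h (N+1) j * g j
            ring

end AdaptiveCI
namespace AdaptiveCI
variable {d : ℕ}

lemma flow_class_bound (P : Matrix (Fin d) (Fin d) ℝ) (hP : IsTransMat P)
    (π₀ : Fin d → ℝ) (hπ₀ : IsProbVec π₀)
    (T m s₀ N : ℕ) (hT : 1 ≤ T) (hs₀ : 1 ≤ s₀) (hs₀T : s₀ ≤ T) (hN : N = T + m * T)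
    (G : Fin d → ℝ) (hG : ∀ i, 0 ≤ G i) (B : ℝ) (hB0 : 0 ≤ B)
    (hB : ∀ i, ∑ j, (P ^ T) i j * G j ≤ B)
    (h : ℕ → Fin d → ℝ)
    (hclass : ∀ q, 1 ≤ q → q ≤ m → h (s₀ + q * T) = G)
    (hnon : ∀ r, (∀ q, 1 ≤ q → q ≤ m → r ≠ s₀ + q * T) → h r = fun _ => 1) :
    ∑ i, flow P π₀ h N i ≤ B ^ m := by
  classical
  -- `h` is pointwise nonnegative
  have hhpos : ∀ n i, 0 ≤ h n i := by
    intro n i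
    by_cases hex : ∃ q, 1 ≤ q ∧ q ≤ m ∧ n = s₀ + q * T
    · obtain ⟨q, h1, h2, rfl⟩ := hex
      rw [hclass q h1 h2]; exact hG i
    · push_neg at hex
      rw [hnon n (fun q hq1 hq2 => hex q hq1 hq2)]
      norm_num
  have hflow0 : ∀ l, 0 ≤ flow P π₀ h l := fun l i => flow_nonneg hP.1 hπ₀.1 hhpos l i
  -- main induction along class times
  have main : ∀ q, q ≤ m → ∑ i, flow P π₀ h (s₀ + q * T) i ≤ B ^ q := by
    intro q
    induction q with
    | zero =>
        intro _
        have hconst : ∀ r, 0 < r → r ≤ 0 + s₀ → h r = fun _ => 1 := by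
          intro r hr1 hr2
          refine hnon r fun q hq1 hq2 heq => ?_
          have : T ≤ q * T := Nat.le_mul_of_pos_left T hq1
          omega
        have h0 : h 0 = fun _ => 1 := by
          refine hnon 0 fun q hq1 hq2 hq3 => ?_
          have : T ≤ q * T := Nat.le_mul_of_pos_left T hq1
          omega
        have hflow : ∀ j, flow P π₀ h (s₀ + 0 * T) j = ∑ i, π₀ i * (P ^ s₀) i j := by
          intro j
          have := flow_const_steps (P := P) (π₀ := π₀) (h := h) 0 s₀
            (fun r hr1 hr2 => hconst r hr1 hr2) j
          simp only [Nat.zero_add] at this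
          have hz : flow P π₀ h 0 = fun i => π₀ i * h 0 i := rfl
          rw [show s₀ + 0 * T = s₀ by omega, this]
          refine Finset.sum_congr rfl fun i _ => ?_
          rw [hz, h0]; ring
        simp only [hflow]
        rw [Finset.sum_comm]
        calc ∑ i, ∑ j, π₀ i * (P ^ s₀) i j
            = ∑ i, π₀ i * ∑ j, (P ^ s₀) i j := by simp [Finset.mul_sum]
          _ = 1 := by simp [(isTransMat_pow hP s₀).2, hπ₀.2]
          _ ≤ B ^ 0 := by simp
    | succ q ih =>
        intro hqm
        have ihq := ih (by omega)
        set n₀ := s₀ + q * T with hn₀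
        have hmid : ∀ i, flow P π₀ h (n₀ + (T - 1)) i
            = ∑ l, flow P π₀ h n₀ l * (P ^ (T - 1)) l i := by
          refine flow_const_steps n₀ (T - 1) fun r hr1 hr2 => hnon r fun q' hq'1 hq'2 heq => ?_
          rcases le_or_gt q' q with hle | hlt
          · have : q' * T ≤ q * T := Nat.mul_le_mul_right T hle
            omega
          · have : (q + 1) * T ≤ q' * T := Nat.mul_le_mul_right T hlt
            have h2 : q * T + T ≤ q' * T := by rw [← Nat.succ_mul]; exact this
            omega
        have hstep : ∀ j, flow P π₀ h (n₀ + T) j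
            = (∑ i, flow P π₀ h (n₀ + (T - 1)) i * P i j) * h (n₀ + T) j := by
          intro j
          have hrw : n₀ + T = (n₀ + (T - 1)) + 1 := by omega
          rw [hrw]
          rfl
        have hcl : h (n₀ + T) = G := by
          have : n₀ + T = s₀ + (q + 1) * T := by rw [hn₀, Nat.succ_mul]; ring
          rw [this]; exact hclass (q + 1) (by omega) hqm
        have hsum : ∑ j, flow P π₀ h (n₀ + T) j
            = ∑ l, flow P π₀ h n₀ l * (∑ j, (P ^ T) l j * G j) := by
          simp only [hstep, hcl, hmid]
          have hTrw : (P ^ T) = (P ^ (T - 1)) * P := by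
            conv_lhs => rw [show T = (T - 1) + 1 by omega]
            rw [pow_succ]
          have hassoc : ∀ j, (∑ i, (∑ l, flow P π₀ h n₀ l * (P ^ (T - 1)) l i) * P i j)
              = ∑ l, flow P π₀ h n₀ l * (P ^ T) l j := by
            intro j
            calc ∑ i, (∑ l, flow P π₀ h n₀ l * (P ^ (T - 1)) l i) * P i j
                = ∑ i, ∑ l, flow P π₀ h n₀ l * (P ^ (T - 1)) l i * P i j :=
                  Finset.sum_congr rfl fun i _ => Finset.sum_mul _ _ _
              _ = ∑ l, ∑ i, flow P π₀ h n₀ l * (P ^ (T - 1)) l i * P i j :=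
                  Finset.sum_comm
              _ = ∑ l, flow P π₀ h n₀ l * ((P ^ (T - 1)) * P) l j := by
                  refine Finset.sum_congr rfl fun l _ => ?_
                  rw [Matrix.mul_apply, Finset.mul_sum]
                  exact Finset.sum_congr rfl fun i _ => by ring
              _ = ∑ l, flow P π₀ h n₀ l * (P ^ T) l j := by rw [← hTrw]
          calc ∑ j, (∑ i, (∑ l, flow P π₀ h n₀ l * (P ^ (T - 1)) l i) * P i j) * G j
              = ∑ j, (∑ l, flow P π₀ h n₀ l * (P ^ T) l j) * G j :=
                Finset.sum_congr rfl fun j _ => by rw [hassoc]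
            _ = ∑ j, ∑ l, flow P π₀ h n₀ l * (P ^ T) l j * G j :=
                Finset.sum_congr rfl fun j _ => Finset.sum_mul _ _ _
            _ = ∑ l, ∑ j, flow P π₀ h n₀ l * (P ^ T) l j * G j := Finset.sum_comm
            _ = ∑ l, flow P π₀ h n₀ l * ∑ j, (P ^ T) l j * G j := by
                refine Finset.sum_congr rfl fun l _ => ?_
                rw [Finset.mul_sum]
                exact Finset.sum_congr rfl fun j _ => by ring
        have : ∑ j, flow P π₀ h (n₀ + T) j ≤ B ^ (q + 1) := by
          calc ∑ j, flow P π₀ h (n₀ + T) j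
              = ∑ l, flow P π₀ h n₀ l * (∑ j, (P ^ T) l j * G j) := hsum
            _ ≤ ∑ l, flow P π₀ h n₀ l * B :=
                Finset.sum_le_sum fun l _ =>
                  mul_le_mul_of_nonneg_left (hB l) (hflow0 n₀ l)
            _ = B * ∑ l, flow P π₀ h n₀ l := by
                rw [← Finset.sum_mul]; ring
            _ ≤ B * B ^ q := mul_le_mul_of_nonneg_left ihq hB0
            _ = B ^ (q + 1) := by rw [pow_succ]; ring
        rw [show s₀ + (q + 1) * T = n₀ + T by rw [hn₀, Nat.succ_mul]; omega]
        exact this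
  -- from the last class time to `N`
  have hm := main m le_rfl
  have htail : ∀ j, flow P π₀ h N j
      = ∑ i, flow P π₀ h (s₀ + m * T) i * (P ^ (T - s₀)) i j := by
    intro j
    rw [show N = (s₀ + m * T) + (T - s₀) by omega]
    refine flow_const_steps (s₀ + m * T) (T - s₀) (fun r hr1 hr2 =>
      hnon r fun q' hq'1 hq'2 heq => ?_) j
    have : q' * T ≤ m * T := Nat.mul_le_mul_right T hq'2
    omega
  calc ∑ j, flow P π₀ h N j
      = ∑ j, ∑ i, flow P π₀ h (s₀ + m * T) i * (P ^ (T - s₀)) i j := by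
        exact Finset.sum_congr rfl fun j _ => htail j
    _ = ∑ i, flow P π₀ h (s₀ + m * T) i * ∑ j, (P ^ (T - s₀)) i j := by
        rw [Finset.sum_comm]
        exact Finset.sum_congr rfl fun i _ => by rw [Finset.mul_sum]
    _ = ∑ i, flow P π₀ h (s₀ + m * T) i := by
        simp [(isTransMat_pow hP (T - s₀)).2]
    _ ≤ B ^ m := hm

end AdaptiveCI
namespace AdaptiveCI
variable {d : ℕ}

lemma exp_convex_bound (y lam : ℝ) (hy : -1 ≤ y) (hy' : y ≤ 1) :
    Real.exp (lam * y) ≤ Real.cosh lam + y * Real.sinh lam := by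
  have ha : (0 : ℝ) ≤ (1 - y) / 2 := by linarith
  have hb : (0 : ℝ) ≤ (1 + y) / 2 := by linarith
  have hab : (1 - y) / 2 + (1 + y) / 2 = (1 : ℝ) := by ring
  have key := convexOn_exp.2 (Set.mem_univ (-lam)) (Set.mem_univ lam) ha hb hab
  simp only [smul_eq_mul] at key
  have h1 : (1 - y) / 2 * (-lam) + (1 + y) / 2 * lam = lam * y := by ring
  rw [h1] at key
  calc Real.exp (lam * y) ≤ (1 - y) / 2 * Real.exp (-lam) + (1 + y) / 2 * Real.exp lam := key
    _ = Real.cosh lam + y * Real.sinh lam := by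
        rw [Real.cosh_eq, Real.sinh_eq]; ring

lemma row_mgf_bound (q : Fin d → ℝ) (hq : IsProbVec q) (f : Fin d → ℝ)
    (hf : ∀ i, f i ∈ Set.Icc (0 : ℝ) 1) (μ ε lam : ℝ)
    (hclose : |(∑ j, q j * f j) - μ| ≤ ε / 2) :
    ∑ j, q j * Real.exp (lam * (f j - μ)) ≤ Real.exp (|lam| * (ε / 2) + lam ^ 2 / 2) := by
  set ν := ∑ j, q j * f j with hν
  have hsplit : ∀ j, Real.exp (lam * (f j - μ))
      = Real.exp (lam * (f j - ν)) * Real.exp (lam * (ν - μ)) := by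
    intro j
    rw [← Real.exp_add]
    congr 1
    ring
  have hterm : ∀ j, q j * Real.exp (lam * (f j - ν))
      ≤ q j * (Real.cosh lam + (f j - ν) * Real.sinh lam) := by
    intro j
    refine mul_le_mul_of_nonneg_left ?_ (hq.1 j)
    have h0 : 0 ≤ ν := Finset.sum_nonneg fun i _ => mul_nonneg (hq.1 i) (hf i).1
    have h1 : ν ≤ 1 := by
      calc ν ≤ ∑ j, q j * 1 := Finset.sum_le_sum fun i _ =>
            mul_le_mul_of_nonneg_left (hf i).2 (hq.1 i)
        _ = 1 := by simp [hq.2]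
    exact exp_convex_bound _ _ (by have := (hf j).1; linarith) (by have := (hf j).2; linarith)
  have hsum1 : ∑ j, q j * (Real.cosh lam + (f j - ν) * Real.sinh lam) = Real.cosh lam := by
    have : ∀ j, q j * (Real.cosh lam + (f j - ν) * Real.sinh lam)
        = q j * Real.cosh lam + (q j * f j - q j * ν) * Real.sinh lam := by intro j; ring
    simp only [this]
    rw [Finset.sum_add_distrib, ← Finset.sum_mul, ← Finset.sum_mul,
      Finset.sum_sub_distrib, ← Finset.sum_mul]
    rw [← hν, hq.2]
    ring
  calc ∑ j, q j * Real.exp (lam * (f j - μ))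
      = (∑ j, q j * Real.exp (lam * (f j - ν))) * Real.exp (lam * (ν - μ)) := by
        rw [Finset.sum_mul]
        exact Finset.sum_congr rfl fun j _ => by rw [hsplit j]; ring
    _ ≤ Real.cosh lam * Real.exp (lam * (ν - μ)) := by
        refine mul_le_mul_of_nonneg_right ?_ (Real.exp_pos _).le
        rw [← hsum1]
        exact Finset.sum_le_sum fun j _ => hterm j
    _ ≤ Real.exp (lam ^ 2 / 2) * Real.exp (|lam| * (ε / 2)) := by
        refine mul_le_mul (Real.cosh_le_exp_half_sq lam) ?_ (Real.exp_pos _).le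
          (Real.exp_pos _).le
        refine Real.exp_le_exp.2 ?_
        calc lam * (ν - μ) ≤ |lam * (ν - μ)| := le_abs_self _
          _ = |lam| * |ν - μ| := abs_mul _ _
          _ ≤ |lam| * (ε / 2) := mul_le_mul_of_nonneg_left hclose (abs_nonneg _)
    _ = Real.exp (|lam| * (ε / 2) + lam ^ 2 / 2) := by
        rw [← Real.exp_add]; ring_nf

lemma pathMass_sum_one (P : Matrix (Fin d) (Fin d) ℝ) (hP : IsTransMat P)
    (π₀ : Fin d → ℝ) (hπ₀ : IsProbVec π₀) (N : ℕ) :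
    ∑ x : Fin (N + 1) → Fin d, pathMass P π₀ N x = 1 := by
  have h := pathSum_prod P N π₀ (fun _ _ => 1) (fun _ => 1)
  simp only [Finset.prod_const_one, mul_one, one_mul] at h
  rw [h]
  have hfl : ∀ j, flow P π₀ (fun _ _ => 1) N j = ∑ i, π₀ i * (P ^ N) i j := by
    intro j
    have := flow_const_steps (P := P) (π₀ := π₀) (h := fun _ _ => 1) 0 N
      (fun r _ _ => rfl) j
    simp only [Nat.zero_add] at this
    rw [this]
    exact Finset.sum_congr rfl fun i _ => by
      show π₀ i * 1 * _ = _
      ring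
  simp only [hfl]
  rw [Finset.sum_comm]
  calc ∑ i, ∑ j, π₀ i * (P ^ N) i j = ∑ i, π₀ i * ∑ j, (P ^ N) i j := by
        simp [Finset.mul_sum]
    _ = 1 := by simp [(isTransMat_pow hP N).2, hπ₀.2]

lemma pathMass_nonneg (P : Matrix (Fin d) (Fin d) ℝ) (hP : IsTransMat P)
    (π₀ : Fin d → ℝ) (hπ₀ : IsProbVec π₀) (N : ℕ) (x : Fin (N + 1) → Fin d) :
    0 ≤ pathMass P π₀ N x :=
  mul_nonneg (hπ₀.1 _) (Finset.prod_nonneg fun n _ => hP.1 _ _)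

end AdaptiveCI
namespace AdaptiveCI
variable {d : ℕ}

lemma pathProb_compl (P : Matrix (Fin d) (Fin d) ℝ) (hP : IsTransMat P)
    (π₀ : Fin d → ℝ) (hπ₀ : IsProbVec π₀) (N : ℕ) (E : (Fin (N + 1) → Fin d) → Prop) :
    pathProb P π₀ N E = 1 - pathProb P π₀ N (fun x => ¬ E x) := by
  classical
  have hadd : pathProb P π₀ N E + pathProb P π₀ N (fun x => ¬ E x) = 1 := by
    unfold pathProb
    rw [← Finset.sum_add_distrib, ← pathMass_sum_one P hP π₀ hπ₀ N]
    refine Finset.sum_congr rfl fun x _ => ?_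
    by_cases hx : E x <;> simp [hx]
  linarith

lemma pathProb_union_le (P : Matrix (Fin d) (Fin d) ℝ) (hP : IsTransMat P)
    (π₀ : Fin d → ℝ) (hπ₀ : IsProbVec π₀) (N : ℕ)
    (E E1 E2 : (Fin (N + 1) → Fin d) → Prop) (h : ∀ x, E x → E1 x ∨ E2 x) :
    pathProb P π₀ N E ≤ pathProb P π₀ N E1 + pathProb P π₀ N E2 := by
  classical
  unfold pathProb
  beta_reduce
  rw [← Finset.sum_add_distrib]
  refine Finset.sum_le_sum fun x _ => ?_
  have hpm := pathMass_nonneg P hP π₀ hπ₀ N x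
  by_cases hx : E x
  · rcases h x hx with h1 | h2
    · rw [if_pos hx, if_pos h1]
      split_ifs <;> linarith
    · rw [if_pos hx, if_pos h2]
      split_ifs <;> linarith
  · rw [if_neg hx]
    split_ifs <;> linarith

lemma pathProb_chernoff (P : Matrix (Fin d) (Fin d) ℝ) (hP : IsTransMat P)
    (π₀ : Fin d → ℝ) (hπ₀ : IsProbVec π₀) (N : ℕ)
    (W : (Fin (N + 1) → Fin d) → ℝ) (c θ : ℝ) (hθ : 0 ≤ θ) :
    pathProb P π₀ N (fun x => c ≤ W x)
      ≤ Real.exp (-(θ * c)) *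
        ∑ x : Fin (N+1) → Fin d, pathMass P π₀ N x * Real.exp (θ * W x) := by
  classical
  unfold pathProb
  beta_reduce
  rw [Finset.mul_sum]
  refine Finset.sum_le_sum fun x _ => ?_
  have hpm := pathMass_nonneg P hP π₀ hπ₀ N x
  have hrw : Real.exp (-(θ * c)) * (pathMass P π₀ N x * Real.exp (θ * W x))
      = pathMass P π₀ N x * Real.exp (θ * (W x - c)) := by
    rw [mul_comm (Real.exp _) _, mul_assoc, ← Real.exp_add]
    congr 2
    ring
  rw [hrw]
  by_cases hx : c ≤ W x
  · rw [if_pos hx]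
    have h1 : (1 : ℝ) ≤ Real.exp (θ * (W x - c)) :=
      Real.one_le_exp (mul_nonneg hθ (by linarith))
    calc pathMass P π₀ N x = pathMass P π₀ N x * 1 := by ring
      _ ≤ _ := mul_le_mul_of_nonneg_left h1 hpm
  · rw [if_neg hx]
    exact mul_nonneg hpm (Real.exp_pos _).le

end AdaptiveCI
end AuxProofs
open AdaptiveCI in
/-- adaptive Hoeffding confidence interval
(Theorem `thm:confidence-adaptive-hoeffding`). -/
theorem adaptive_confidence_interval
    {d : ℕ} (hd : 0 < d)
    (P : Matrix (Fin d) (Fin d) ℝ) (π f : Fin d → ℝ)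
    (hP : IsTransMat P) (hirr : IsIrreducibleMat P) (haper : IsAperiodicMat P)
    (hπ : IsStationaryDist P π)
    (hf : ∀ i, f i ∈ Set.Icc (0 : ℝ) 1)
    (μ : ℝ) (hμ : μ = ∑ i, π i * f i)
    (α : ℝ) (hα : α ∈ Set.Ioo (0 : ℝ) 1)
    (εN : ℝ) (hεN : 0 < εN)
    (N T : ℕ) (hT : T = fMixTime P π f (εN / 2))
    (hrate : 8 * Real.log (2 / α) ≤ εN ^ 2 * ((N : ℝ) / (T : ℝ) - 1))
    (hNT : T < N) (hdvd : T ∣ (N - T)) :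
    ∀ π₀ : Fin d → ℝ, IsProbVec π₀ →
      1 - α ≤ pathProb P π₀ N (fun x =>
        μ - εN ≤
            (1 / ((N : ℝ) - (T : ℝ))) * ∑ n : Fin (N + 1), (if T < (n : ℕ) then f (x n) else 0) ∧
        (1 / ((N : ℝ) - (T : ℝ))) * ∑ n : Fin (N + 1), (if T < (n : ℕ) then f (x n) else 0) ≤
            μ + εN) := by
  classical
  intro π₀ hπ₀
  obtain ⟨hα0, hα1⟩ := hα
  have hlogpos : 0 < Real.log (2 / α) := Real.log_pos (by rw [lt_div_iff₀ hα0]; linarith)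
  -- `T` is at least 1 and achieves the mixing bound
  have hTne : T ≠ 0 := by
    intro h0
    rw [h0] at hrate
    simp only [Nat.cast_zero, div_zero, zero_sub] at hrate
    nlinarith [sq_nonneg εN]
  have hTmem : 1 ≤ T ∧ ∀ i, fDisc f (fun j => (P ^ T) i j) π ≤ εN / 2 := by
    have hne : {n : ℕ | 1 ≤ n ∧ ∀ i, fDisc f (fun j => (P ^ n) i j) π ≤ εN / 2}.Nonempty := by
      by_contra hcon
      rw [Set.not_nonempty_iff_eq_empty] at hcon
      rw [hT, fMixTime, hcon, Nat.sInf_empty] at hTne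
      exact hTne rfl
    have hmem := Nat.sInf_mem hne
    rw [← fMixTime, ← hT] at hmem
    exact hmem
  obtain ⟨hT1, hmix⟩ := hTmem
  obtain ⟨m, hm⟩ := hdvd
  have hNeq : N = T * m + T := by
    have := (Nat.sub_eq_iff_eq_add (le_of_lt hNT)).1 hm
    omega
  have hm1 : 1 ≤ m := by
    rcases Nat.eq_zero_or_pos m with h0 | h1
    · rw [h0, Nat.mul_zero] at hNeq; omega
    · exact h1
  have hTpos : (0 : ℝ) < (T : ℝ) := Nat.cast_pos.2 (by omega)
  have hmpos : (0 : ℝ) < (m : ℝ) := Nat.cast_pos.2 (by omega)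
  have hTne' : (T : ℝ) ≠ 0 := ne_of_gt hTpos
  have hNcast : (N : ℝ) = (T : ℝ) * (m : ℝ) + (T : ℝ) := by
    rw [hNeq]; push_cast; ring
  have hNTreal : ((N : ℝ) - (T : ℝ)) = (m : ℝ) * (T : ℝ) := by rw [hNcast]; ring
  -- class times
  have hTm : T * m = m * T := Nat.mul_comm T m
  have htval : ∀ (s : Fin T) (q : Fin m), T + 1 + ((s : ℕ) + (q : ℕ) * T) < N + 1 := by
    intro s q
    have h1 : (s : ℕ) < T := s.isLt
    have h3 : ((q : ℕ) + 1) * T ≤ m * T := Nat.mul_le_mul_right T (by have := q.isLt; omega)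
    have h4 : (s : ℕ) + (q : ℕ) * T < ((q : ℕ) + 1) * T := by rw [Nat.succ_mul]; omega
    omega
  set time : Fin T → Fin m → Fin (N + 1) :=
    fun s q => ⟨T + 1 + ((s : ℕ) + (q : ℕ) * T), htval s q⟩ with htime
  have hmod : ∀ (s q : ℕ), s < T → (s + q * T) % T = s := fun s q hs => by
    rw [Nat.add_mul_mod_self_right, Nat.mod_eq_of_lt hs]
  have hdiv : ∀ (s q : ℕ), s < T → (s + q * T) / T = q := fun s q hs => by
    rw [Nat.add_mul_div_right _ _ (by omega : 0 < T), Nat.div_eq_of_lt hs, Nat.zero_add]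
  -- reindexing of the post-burn-in sum into classes
  have hreindex : ∀ v : Fin (N + 1) → ℝ,
      (∑ n : Fin (N + 1), if T < (n : ℕ) then v n else 0)
      = ∑ s : Fin T, ∑ q : Fin m, v (time s q) := by
    intro v
    rw [← Finset.sum_filter]
    have hfilt : (Finset.univ.filter (fun n : Fin (N + 1) => T < (n : ℕ)))
        = Finset.image (fun p : Fin T × Fin m => time p.1 p.2) Finset.univ := by
      ext n
      simp only [Finset.mem_filter, Finset.mem_univ, true_and, Finset.mem_image]
      constructor
      · intro hn
        have hnN : (n : ℕ) ≤ N := by omega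
        have hkm : (n : ℕ) - (T + 1) < T * m := by
          have h11 : 1 * 1 ≤ T * m := Nat.mul_le_mul hT1 hm1
          omega
        have hkm' : (n : ℕ) - (T + 1) < m * T := by omega
        refine ⟨(⟨((n : ℕ) - (T + 1)) % T, Nat.mod_lt _ (by omega)⟩,
          ⟨((n : ℕ) - (T + 1)) / T, (Nat.div_lt_iff_lt_mul (by omega : 0 < T)).2 hkm'⟩),
          Fin.ext ?_⟩
        show T + 1 + (((n : ℕ) - (T + 1)) % T + ((n : ℕ) - (T + 1)) / T * T) = (n : ℕ)
        rw [Nat.mod_add_div']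
        omega
      · rintro ⟨p, rfl⟩
        show T < T + 1 + ((p.1 : ℕ) + (p.2 : ℕ) * T)
        omega
    rw [hfilt, Finset.sum_image, Fintype.sum_prod_type]
    intro p1 _ p2 _ hpe
    have hval : T + 1 + ((p1.1 : ℕ) + (p1.2 : ℕ) * T)
        = T + 1 + ((p2.1 : ℕ) + (p2.2 : ℕ) * T) := congrArg Fin.val hpe
    have heq : (p1.1 : ℕ) + (p1.2 : ℕ) * T = (p2.1 : ℕ) + (p2.2 : ℕ) * T := by omega
    have hs1 := hmod p1.1 p1.2 p1.1.isLt
    have hs2 := hmod p2.1 p2.2 p2.1.isLt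
    have hq1 := hdiv p1.1 p1.2 p1.1.isLt
    have hq2 := hdiv p2.1 p2.2 p2.1.isLt
    rw [heq] at hs1 hq1
    exact Prod.ext (Fin.ext (by omega)) (Fin.ext (by omega))
  -- per-class moment generating function bound
  have hPT := isTransMat_pow hP T
  have hclassMGF : ∀ (s : Fin T) (lam : ℝ),
      ∑ x : Fin (N + 1) → Fin d, pathMass P π₀ N x *
        Real.exp (lam * ∑ q : Fin m, (f (x (time s q)) - μ))
      ≤ (Real.exp (|lam| * (εN / 2) + lam ^ 2 / 2)) ^ m := by
    intro s lam
    set G : Fin d → ℝ := fun i => Real.exp (lam * (f i - μ)) with hG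
    set hs : ℕ → Fin d → ℝ := fun n i =>
      if ∃ q, 1 ≤ q ∧ q ≤ m ∧ n = ((s : ℕ) + 1) + q * T then G i else 1 with hhs
    have htinj : ∀ q1 ∈ Finset.univ, ∀ q2 ∈ Finset.univ,
        time s q1 = time s q2 → q1 = q2 := by
      intro q1 _ q2 _ hqe
      have hval : T + 1 + ((s : ℕ) + (q1 : ℕ) * T) = T + 1 + ((s : ℕ) + (q2 : ℕ) * T) :=
        congrArg Fin.val hqe
      have : (q1 : ℕ) * T = (q2 : ℕ) * T := by omega
      exact Fin.ext (Nat.eq_of_mul_eq_mul_right (by omega) this)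
    have hprod : ∀ x : Fin (N + 1) → Fin d,
        (∏ n : Fin (N + 1), hs (n : ℕ) (x n))
        = Real.exp (lam * ∑ q : Fin m, (f (x (time s q)) - μ)) := by
      intro x
      have hterm : ∀ n : Fin (N + 1), hs (n : ℕ) (x n)
          = if (∃ q, 1 ≤ q ∧ q ≤ m ∧ (n : ℕ) = ((s : ℕ) + 1) + q * T)
              then G (x n) else 1 := fun n => rfl
      rw [Finset.prod_congr rfl fun n _ => hterm n, ← Finset.prod_filter]
      have hfs : (Finset.univ.filter (fun n : Fin (N + 1) =>
            ∃ q, 1 ≤ q ∧ q ≤ m ∧ (n : ℕ) = ((s : ℕ) + 1) + q * T))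
          = Finset.image (fun q : Fin m => time s q) Finset.univ := by
        ext n
        simp only [Finset.mem_filter, Finset.mem_univ, true_and, Finset.mem_image]
        constructor
        · rintro ⟨q, hq1, hq2, hqe⟩
          refine ⟨⟨q - 1, by omega⟩, Fin.ext ?_⟩
          show T + 1 + ((s : ℕ) + (q - 1) * T) = (n : ℕ)
          have hq3 : (q - 1) * T + T = q * T := by
            rw [← Nat.succ_mul]
            congr 1
            omega
          omega
        · rintro ⟨q, rfl⟩
          refine ⟨(q : ℕ) + 1, by omega, by have := q.isLt; omega, ?_⟩
          show T + 1 + ((s : ℕ) + (q : ℕ) * T) = ((s : ℕ) + 1) + ((q : ℕ) + 1) * T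
          rw [Nat.succ_mul]
          omega
      rw [hfs, Finset.prod_image htinj, Finset.mul_sum, Real.exp_sum]
    have hmain := pathSum_prod P N π₀ hs (fun _ => 1)
    simp only [mul_one] at hmain
    have hrowB : ∀ i, ∑ j, (P ^ T) i j * G j
        ≤ Real.exp (|lam| * (εN / 2) + lam ^ 2 / 2) := by
      intro i
      refine row_mgf_bound (fun j => (P ^ T) i j) ⟨hPT.1 i, hPT.2 i⟩ f hf μ εN lam ?_
      have := hmix i
      unfold fDisc at this
      rw [hμ]
      exact this
    calc ∑ x : Fin (N + 1) → Fin d, pathMass P π₀ N x *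
          Real.exp (lam * ∑ q : Fin m, (f (x (time s q)) - μ))
        = ∑ x : Fin (N + 1) → Fin d, pathMass P π₀ N x *
            ∏ n : Fin (N + 1), hs (n : ℕ) (x n) :=
          Finset.sum_congr rfl fun x _ => by rw [hprod x]
      _ = ∑ i, flow P π₀ hs N i := hmain
      _ ≤ (Real.exp (|lam| * (εN / 2) + lam ^ 2 / 2)) ^ m := by
          refine flow_class_bound P hP π₀ hπ₀ T m ((s : ℕ) + 1) N hT1 (by omega)
            (by have := s.isLt; omega) (by rw [hNeq, hTm]; omega)
            G (fun i => (Real.exp_pos _).le) _ (Real.exp_pos _).le hrowB hs ?_ ?_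
          · intro q hq1 hq2
            funext i
            show (if ∃ q', 1 ≤ q' ∧ q' ≤ m ∧ (s : ℕ) + 1 + q * T = ((s : ℕ) + 1) + q' * T
              then G i else 1) = G i
            exact if_pos ⟨q, hq1, hq2, rfl⟩
          · intro r hr
            funext i
            show (if ∃ q', 1 ≤ q' ∧ q' ≤ m ∧ r = ((s : ℕ) + 1) + q' * T then G i else 1) = 1
            refine if_neg ?_
            rintro ⟨q', hq1, hq2, hqe⟩
            exact hr q' hq1 hq2 hqe
  -- abbreviations
  set Z : (Fin (N + 1) → Fin d) → ℝ := fun x =>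
    (∑ n : Fin (N + 1), if T < (n : ℕ) then f (x n) else 0) - ((m : ℝ) * (T : ℝ)) * μ
    with hZdef
  have hZ : ∀ x, Z x = ∑ s : Fin T, ∑ q : Fin m, (f (x (time s q)) - μ) := by
    intro x
    show (∑ n : Fin (N + 1), if T < (n : ℕ) then f (x n) else 0) - ((m : ℝ) * (T : ℝ)) * μ = _
    rw [hreindex (fun n => f (x n))]
    simp only [Finset.sum_sub_distrib, Finset.sum_const, Finset.card_univ, Fintype.card_fin,
      nsmul_eq_mul]
    push_cast
    ring
  set θ : ℝ := εN / (2 * (T : ℝ)) with hθdef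
  have hθpos : 0 < θ := by rw [hθdef]; positivity
  set c : ℝ := ((m : ℝ) * (T : ℝ)) * εN with hcdef
  have hexp_le : Real.exp (-(m : ℝ) * εN ^ 2 / 8) ≤ α / 2 := by
    have hform : (N : ℝ) / (T : ℝ) - 1 = (m : ℝ) := by
      rw [hNcast]
      field_simp
      ring
    rw [hform] at hrate
    have hlog : Real.log (α / 2) = - Real.log (2 / α) := by
      rw [← Real.log_inv, inv_div]
    have h1 : -(m : ℝ) * εN ^ 2 / 8 ≤ Real.log (α / 2) := by
      rw [hlog]; nlinarith
    calc Real.exp (-(m : ℝ) * εN ^ 2 / 8) ≤ Real.exp (Real.log (α / 2)) :=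
          Real.exp_le_exp.2 h1
      _ = α / 2 := Real.exp_log (by positivity)
  -- tail bound for both signs
  have tail : ∀ σ : ℝ, σ = 1 ∨ σ = -1 →
      pathProb P π₀ N (fun x => c ≤ σ * Z x) ≤ α / 2 := by
    intro σ hσ
    have hσabs : |σ| = 1 := by rcases hσ with rfl | rfl <;> norm_num
    have hσsq : σ ^ 2 = 1 := by rcases hσ with rfl | rfl <;> norm_num
    set lam : ℝ := σ * (εN / 2) with hlamdef
    have hlamabs : |lam| = εN / 2 := by
      rw [hlamdef, abs_mul, hσabs, one_mul, abs_of_pos (by linarith)]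
    have hlamsq : lam ^ 2 = εN ^ 2 / 4 := by rw [hlamdef, mul_pow, hσsq]; ring
    have h1 := pathProb_chernoff P hP π₀ hπ₀ N (fun x => σ * Z x) c θ hθpos.le
    have hjen : ∀ x : Fin (N + 1) → Fin d, Real.exp (θ * (σ * Z x))
        ≤ ∑ s : Fin T, (1 / (T : ℝ)) *
            Real.exp (lam * (∑ q : Fin m, (f (x (time s q)) - μ))) := by
      intro x
      have hrw : θ * (σ * Z x) = ∑ s : Fin T,
          (1 / (T : ℝ)) • (lam * (∑ q : Fin m, (f (x (time s q)) - μ))) := by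
        simp only [smul_eq_mul]
        rw [← Finset.mul_sum, ← Finset.mul_sum, ← hZ x, hθdef, hlamdef]
        field_simp
      rw [hrw]
      have hw1 : ∑ _s : Fin T, (1 / (T : ℝ)) = 1 := by
        simp only [Finset.sum_const, Finset.card_univ, Fintype.card_fin, nsmul_eq_mul]
        field_simp
      have := convexOn_exp.map_sum_le (t := (Finset.univ : Finset (Fin T)))
        (w := fun _ : Fin T => 1 / (T : ℝ))
        (p := fun s => lam * (∑ q : Fin m, (f (x (time s q)) - μ)))
        (fun i _ => by positivity) hw1 (fun i _ => Set.mem_univ _)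
      simpa [smul_eq_mul] using this
    have h2 : ∑ x : Fin (N + 1) → Fin d, pathMass P π₀ N x * Real.exp (θ * (σ * Z x))
        ≤ Real.exp ((m : ℝ) * (3 * εN ^ 2 / 8)) := by
      calc ∑ x : Fin (N + 1) → Fin d, pathMass P π₀ N x * Real.exp (θ * (σ * Z x))
          ≤ ∑ x : Fin (N + 1) → Fin d, pathMass P π₀ N x *
              (∑ s : Fin T, (1 / (T : ℝ)) *
                Real.exp (lam * (∑ q : Fin m, (f (x (time s q)) - μ)))) :=
            Finset.sum_le_sum fun x _ =>
              mul_le_mul_of_nonneg_left (hjen x) (pathMass_nonneg P hP π₀ hπ₀ N x)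
        _ = ∑ s : Fin T, (1 / (T : ℝ)) *
              ∑ x : Fin (N + 1) → Fin d, pathMass P π₀ N x *
                Real.exp (lam * (∑ q : Fin m, (f (x (time s q)) - μ))) := by
            have e1 : ∀ x : Fin (N + 1) → Fin d, pathMass P π₀ N x *
                (∑ s : Fin T, (1 / (T : ℝ)) *
                  Real.exp (lam * (∑ q : Fin m, (f (x (time s q)) - μ))))
                = ∑ s : Fin T, (1 / (T : ℝ)) * (pathMass P π₀ N x *
                  Real.exp (lam * (∑ q : Fin m, (f (x (time s q)) - μ)))) := by
              intro x
              rw [Finset.mul_sum]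
              exact Finset.sum_congr rfl fun s _ => by ring
            rw [Finset.sum_congr rfl fun x _ => e1 x, Finset.sum_comm]
            exact Finset.sum_congr rfl fun s _ => by rw [Finset.mul_sum]
        _ ≤ ∑ _s : Fin T, (1 / (T : ℝ)) *
              (Real.exp (|lam| * (εN / 2) + lam ^ 2 / 2)) ^ m :=
            Finset.sum_le_sum fun s _ =>
              mul_le_mul_of_nonneg_left (hclassMGF s lam) (by positivity)
        _ = (Real.exp (|lam| * (εN / 2) + lam ^ 2 / 2)) ^ m := by
            simp only [Finset.sum_const, Finset.card_univ, Fintype.card_fin, nsmul_eq_mul]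
            field_simp
        _ = Real.exp ((m : ℝ) * (3 * εN ^ 2 / 8)) := by
            rw [hlamabs, hlamsq, ← Real.exp_nat_mul]
            congr 1
            ring
    calc pathProb P π₀ N (fun x => c ≤ σ * Z x)
        ≤ Real.exp (-(θ * c)) *
            ∑ x : Fin (N + 1) → Fin d, pathMass P π₀ N x * Real.exp (θ * (σ * Z x)) := h1
      _ ≤ Real.exp (-(θ * c)) * Real.exp ((m : ℝ) * (3 * εN ^ 2 / 8)) :=
          mul_le_mul_of_nonneg_left h2 (Real.exp_pos _).le
      _ = Real.exp (-(m : ℝ) * εN ^ 2 / 8) := by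
          rw [← Real.exp_add]
          congr 1
          rw [hθdef, hcdef]
          field_simp
          ring
      _ ≤ α / 2 := hexp_le
  -- complement and union bound
  have hcompl := pathProb_compl P hP π₀ hπ₀ N (fun x =>
    μ - εN ≤
        (1 / ((N : ℝ) - (T : ℝ))) * ∑ n : Fin (N + 1), (if T < (n : ℕ) then f (x n) else 0) ∧
    (1 / ((N : ℝ) - (T : ℝ))) * ∑ n : Fin (N + 1), (if T < (n : ℕ) then f (x n) else 0) ≤
        μ + εN)
  have hDpos : (0 : ℝ) < (N : ℝ) - (T : ℝ) := by rw [hNTreal]; positivity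
  have himp : ∀ x : Fin (N + 1) → Fin d,
      (¬ (μ - εN ≤
        (1 / ((N : ℝ) - (T : ℝ))) * ∑ n : Fin (N + 1), (if T < (n : ℕ) then f (x n) else 0) ∧
      (1 / ((N : ℝ) - (T : ℝ))) * ∑ n : Fin (N + 1), (if T < (n : ℕ) then f (x n) else 0) ≤
          μ + εN)) → (c ≤ 1 * Z x) ∨ (c ≤ (-1) * Z x) := by
    intro x hx
    set S : ℝ := ∑ n : Fin (N + 1), (if T < (n : ℕ) then f (x n) else 0) with hSdef
    have hZx : Z x = S - ((m : ℝ) * (T : ℝ)) * μ := rfl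
    have hmul : (1 / ((N : ℝ) - (T : ℝ))) * S * ((N : ℝ) - (T : ℝ)) = S := by
      field_simp
    rcases not_and_or.1 hx with h | h
    · push_neg at h
      right
      have hS : S < (μ - εN) * ((N : ℝ) - (T : ℝ)) := by
        have := mul_lt_mul_of_pos_right h hDpos
        rw [hmul] at this
        linarith
      rw [hNTreal] at hS
      have hexp : (μ - εN) * ((m : ℝ) * (T : ℝ))
          = ((m : ℝ) * (T : ℝ)) * μ - ((m : ℝ) * (T : ℝ)) * εN := by ring
      rw [hZx, hcdef]
      linarith
    · push_neg at h
      left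
      have hS : (μ + εN) * ((N : ℝ) - (T : ℝ)) < S := by
        have := mul_lt_mul_of_pos_right h hDpos
        rw [hmul] at this
        linarith
      rw [hNTreal] at hS
      have hexp : (μ + εN) * ((m : ℝ) * (T : ℝ))
          = ((m : ℝ) * (T : ℝ)) * μ + ((m : ℝ) * (T : ℝ)) * εN := by ring
      rw [hZx, hcdef]
      linarith
  have hub := pathProb_union_le P hP π₀ hπ₀ N _ (fun x => c ≤ 1 * Z x)
    (fun x => c ≤ (-1) * Z x) himp
  have t1 := tail 1 (Or.inl rfl)
  have t2 := tail (-1) (Or.inr rfl)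
  rw [hcompl]
  linarith
end

section
/- Let T̃ : (0,∞) → ℕ be an upper bound on the f-mixing time, i.e. T̃(δ) ≥ T_f(δ) ≥ 1 for all δ > 0, and define r̃_N(ε) := ε² · ( N / T̃(ε/2) − 1 ). Fix α ∈ (0,1), let ε_N > 0 satisfy r̃_N(ε_N) ≥ 8·log(2/α), set T̃' := T̃(ε_N/2), and suppose N > T̃' and that T_f(ε_N/2) divides N − T̃'. Then for every initial probability vector π₀, setting μ̂ := (1/(N−T̃')) · ∑_{n=T̃'+1}^{N} f(X_n), the chain started from π₀ satisfies P( μ − ε_N ≤ μ̂ ≤ μ + ε_N ) ≥ 1 − α. -/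
open Finset

section Aux
variable {d : ℕ}

theorem transMat_pow {P : Matrix (Fin d) (Fin d) ℝ} (hP : IsTransMat P) (n : ℕ) :
    IsTransMat (P ^ n) := by
  induction n with
  | zero =>
    constructor
    · intro i j
      by_cases h : i = j <;> simp [pow_zero, Matrix.one_apply, h]
    · intro i; simp [pow_zero, Matrix.one_apply]
  | succ n ih =>
    rw [pow_succ]
    constructor
    · intro i j
      rw [Matrix.mul_apply]
      exact Finset.sum_nonneg fun k _ => mul_nonneg (ih.1 i k) (hP.1 k j)
    · intro i
      simp only [Matrix.mul_apply]
      rw [Finset.sum_comm]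
      simp only [← Finset.mul_sum, hP.2]
      simpa using ih.2 i

/-- forward-fold expectation -/
def expE (P : Matrix (Fin d) (Fin d) ℝ) : ℕ → (Fin d → ℝ) → (ℕ → Fin d → ℝ) → ℝ
  | 0, w, h => ∑ i, w i * h 0 i
  | (N+1), w, h => expE P N (fun j => ∑ i, w i * h 0 i * P i j) (fun n => h (n+1))

theorem expE_path (P : Matrix (Fin d) (Fin d) ℝ) :
    ∀ (N : ℕ) (π₀ : Fin d → ℝ) (h : ℕ → Fin d → ℝ),
    ∑ x : Fin (N + 1) → Fin d, pathMass P π₀ N x * ∏ n : Fin (N + 1), h (n : ℕ) (x n)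
      = expE P N π₀ h := by
  intro N
  induction N with
  | zero =>
    intro π₀ h
    rw [← (Equiv.funUnique (Fin 1) (Fin d)).symm.sum_comp]
    simp [expE, pathMass]
  | succ N ih =>
    intro π₀ h
    show _ = expE P N (fun j => ∑ i, π₀ i * h 0 i * P i j) (fun n => h (n+1))
    rw [← ih]
    rw [← (Fin.consEquiv (fun _ : Fin (N+2) => Fin d)).sum_comp]
    simp only [Fin.consEquiv_apply]
    rw [Fintype.sum_prod_type, Finset.sum_comm]
    apply Finset.sum_congr rfl
    intro x _
    have hmass : ∀ i : Fin d, pathMass P π₀ (N+1) (Fin.cons i x)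
        = π₀ i * P i (x 0) * ∏ n : Fin N, P (x n.castSucc) (x n.succ) := by
      intro i
      unfold pathMass
      rw [Fin.prod_univ_succ]
      have h1 : ∀ n : Fin N, (Fin.cons i x : Fin (N+2) → Fin d) n.succ.castSucc
          = x n.castSucc := by
        intro n
        rw [← Fin.succ_castSucc, Fin.cons_succ]
      simp only [Fin.cons_zero, Fin.cons_succ, h1, Fin.castSucc_zero]
      ring
    have hprod : ∀ i : Fin d,
        (∏ n : Fin (N+2), h (n : ℕ) ((Fin.cons i x : Fin (N+2) → Fin d) n))
        = h 0 i * ∏ n : Fin (N+1), h ((n : ℕ)+1) (x n) := by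
      intro i
      rw [Fin.prod_univ_succ]
      simp only [Fin.cons_zero, Fin.cons_succ, Fin.val_succ, Fin.val_zero]
    calc ∑ i : Fin d, pathMass P π₀ (N+1) (Fin.cons i x)
          * ∏ n : Fin (N+2), h (n:ℕ) ((Fin.cons i x : Fin (N+2) → Fin d) n)
        = ∑ i : Fin d, (π₀ i * h 0 i * P i (x 0))
            * ((∏ n : Fin N, P (x n.castSucc) (x n.succ)) * ∏ n : Fin (N+1), h ((n:ℕ)+1) (x n)) := by
          apply Finset.sum_congr rfl
          intro i _
          rw [hmass i, hprod i]; ring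
      _ = pathMass P (fun j => ∑ i, π₀ i * h 0 i * P i j) N x
            * ∏ n : Fin (N+1), h ((n:ℕ)+1) (x n) := by
          unfold pathMass
          rw [Finset.sum_mul, Finset.sum_mul]
          apply Finset.sum_congr rfl
          intro i _
          ring

theorem expE_tail_ones {P : Matrix (Fin d) (Fin d) ℝ} (hP : IsTransMat P) :
    ∀ (N : ℕ) (w : Fin d → ℝ) (h : ℕ → Fin d → ℝ),
    (∀ n, 1 ≤ n → n ≤ N → h n = fun _ => 1) →
    expE P N w h = ∑ i, w i * h 0 i := by
  intro N
  induction N with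
  | zero => intro w h _; rfl
  | succ N ih =>
    intro w h hones
    show expE P N (fun j => ∑ i, w i * h 0 i * P i j) (fun n => h (n+1)) = _
    rw [ih _ _ (fun n h1 h2 => hones (n+1) (by omega) (by omega))]
    rw [hones 1 le_rfl (by omega)]
    simp only [mul_one]
    rw [Finset.sum_comm]
    apply Finset.sum_congr rfl
    intro i _
    rw [← Finset.mul_sum, hP.2 i, mul_one]

theorem expE_skip {P : Matrix (Fin d) (Fin d) ℝ} :
    ∀ (k : ℕ) (N : ℕ) (w : Fin d → ℝ) (h h' : ℕ → Fin d → ℝ),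
    (∀ n, h n = if n < k then (fun _ => 1) else h' (n - k)) →
    expE P (N + k) w h = expE P N (Matrix.vecMul w (P ^ k)) h' := by
  intro k
  induction k with
  | zero =>
    intro N w h h' hh
    have : h = h' := by
      funext n; rw [hh n]; simp
    rw [this, pow_zero, Matrix.vecMul_one]
    rfl
  | succ k ih =>
    intro N w h h' hh
    show expE P (N + k) (fun j => ∑ i, w i * h 0 i * P i j) (fun n => h (n+1)) = _
    have h0 : h 0 = fun _ => 1 := by rw [hh 0]; simp
    have hstep : (fun j => ∑ i, w i * h 0 i * P i j) = Matrix.vecMul w P := by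
      funext j
      rw [h0, Matrix.vecMul, dotProduct]
      simp
    rw [hstep, ih N _ _ h' ?_]
    · rw [Matrix.vecMul_vecMul, ← pow_succ']
    · intro n
      rw [hh (n+1)]
      have : n + 1 - (k + 1) = n - k := by omega
      rw [this]
      by_cases hc : n < k
      · rw [if_pos (by omega), if_pos hc]
      · rw [if_neg (by omega), if_neg hc]

theorem sum_vecMul_trans {P : Matrix (Fin d) (Fin d) ℝ} (hP : IsTransMat P)
    (w : Fin d → ℝ) : ∑ j, Matrix.vecMul w P j = ∑ i, w i := by
  simp only [Matrix.vecMul, dotProduct]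
  rw [Finset.sum_comm]
  apply Finset.sum_congr rfl
  intro i _
  rw [← Finset.mul_sum, hP.2 i, mul_one]

theorem vecMul_nonneg {P : Matrix (Fin d) (Fin d) ℝ} (hP : IsTransMat P)
    {w : Fin d → ℝ} (hw : ∀ i, 0 ≤ w i) : ∀ j, 0 ≤ Matrix.vecMul w P j := by
  intro j
  rw [Matrix.vecMul, dotProduct]
  exact Finset.sum_nonneg fun i _ => mul_nonneg (hw i) (hP.1 i j)


section Hoeff

theorem exp_quad_bound {x : ℝ} (hx : |x| ≤ 1) : Real.exp x ≤ 1 + x + x ^ 2 := by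
  have h := Real.exp_bound hx (n := 2) (by norm_num)
  have h2 : ∑ i ∈ Finset.range 2, x ^ i / (Nat.factorial i) = 1 + x := by
    simp [Finset.sum_range_succ]
  rw [h2] at h
  norm_num [Nat.factorial] at h
  have h4 := (abs_le.1 h).2
  have h5 : |x| ^ 2 = x ^ 2 := sq_abs x
  nlinarith [sq_nonneg x]

theorem one_nu_exp_bound {ν t : ℝ} (hν0 : 0 ≤ ν) (hν1 : ν ≤ 1) (ht : |t| ≤ 1) :
    1 - ν + ν * Real.exp t ≤ Real.exp (ν * t + t ^ 2 / 2) := by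
  have key : 1 - ν + ν * Real.exp t
      = Real.exp (ν * t) * ((1 - ν) * Real.exp (-(ν * t)) + ν * Real.exp ((1 - ν) * t)) := by
    have a1 : Real.exp (ν * t) * ((1 - ν) * Real.exp (-(ν * t))) = 1 - ν := by
      rw [mul_comm, mul_assoc, ← Real.exp_add]
      simp
    have a2 : Real.exp (ν * t) * (ν * Real.exp ((1 - ν) * t)) = ν * Real.exp t := by
      rw [mul_comm, mul_assoc, ← Real.exp_add]
      congr 2
      ring
    rw [mul_add, a1, a2]
  rw [key]
  have hb1 : Real.exp (-(ν * t)) ≤ 1 + (-(ν*t)) + (ν*t)^2 := by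
    have := exp_quad_bound (x := -(ν*t)) (by
      rw [abs_neg, abs_mul]
      calc |ν| * |t| ≤ 1 * 1 := by
            apply mul_le_mul _ ht (abs_nonneg t) zero_le_one
            rw [abs_of_nonneg hν0]; exact hν1
        _ = 1 := by norm_num)
    calc Real.exp (-(ν*t)) ≤ 1 + (-(ν*t)) + (-(ν*t))^2 := this
      _ = 1 + (-(ν*t)) + (ν*t)^2 := by ring
  have hb2 : Real.exp ((1 - ν) * t) ≤ 1 + (1-ν)*t + ((1-ν)*t)^2 := by
    apply exp_quad_bound
    rw [abs_mul]
    calc |1-ν| * |t| ≤ 1 * 1 := by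
          apply mul_le_mul _ ht (abs_nonneg t) zero_le_one
          rw [abs_of_nonneg (by linarith)]; linarith
      _ = 1 := by norm_num
  have hbr : (1 - ν) * Real.exp (-(ν * t)) + ν * Real.exp ((1 - ν) * t)
      ≤ 1 + ν * (1 - ν) * t ^ 2 := by
    have e1 : (1-ν) * Real.exp (-(ν*t)) ≤ (1-ν) * (1 + (-(ν*t)) + (ν*t)^2) :=
      mul_le_mul_of_nonneg_left hb1 (by linarith)
    have e2 : ν * Real.exp ((1-ν)*t) ≤ ν * (1 + (1-ν)*t + ((1-ν)*t)^2) :=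
      mul_le_mul_of_nonneg_left hb2 hν0
    nlinarith [e1, e2]
  have hfin : 1 + ν * (1 - ν) * t ^ 2 ≤ Real.exp (t ^ 2 / 2) := by
    have h4 : ν * (1 - ν) ≤ 1 / 4 := by nlinarith [sq_nonneg (ν - 1/2)]
    have : 1 + ν * (1-ν) * t^2 ≤ 1 + t^2/2 := by nlinarith [sq_nonneg t]
    calc 1 + ν * (1-ν) * t^2 ≤ 1 + t^2/2 := this
      _ ≤ Real.exp (t^2/2) := by
          have := Real.add_one_le_exp (t^2/2)
          linarith
  calc Real.exp (ν*t) * ((1 - ν) * Real.exp (-(ν * t)) + ν * Real.exp ((1 - ν) * t))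
      ≤ Real.exp (ν*t) * (Real.exp (t^2/2)) := by
        apply mul_le_mul_of_nonneg_left _ (Real.exp_nonneg _)
        exact le_trans hbr hfin
    _ = Real.exp (ν*t + t^2/2) := (Real.exp_add _ _).symm

/-- Hoeffding-type mgf bound for a probability vector. -/
theorem prob_mgf {d : ℕ} {q f : Fin d → ℝ} (hq0 : ∀ i, 0 ≤ q i) (hq1 : ∑ i, q i = 1)
    (hf : ∀ i, f i ∈ Set.Icc (0:ℝ) 1) {t : ℝ} (ht : |t| ≤ 1) :
    ∑ i, q i * Real.exp (t * f i) ≤ Real.exp (t * (∑ i, q i * f i) + t ^ 2 / 2) := by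
  set ν := ∑ i, q i * f i with hνdef
  have hν0 : 0 ≤ ν := Finset.sum_nonneg fun i _ => mul_nonneg (hq0 i) (hf i).1
  have hν1 : ν ≤ 1 := by
    calc ν ≤ ∑ i, q i := Finset.sum_le_sum fun i _ => by
          nlinarith [(hf i).2, hq0 i]
      _ = 1 := hq1
  have step1 : ∑ i, q i * Real.exp (t * f i) ≤ 1 - ν + ν * Real.exp t := by
    have hpt : ∀ i, Real.exp (t * f i) ≤ (1 - f i) + f i * Real.exp t := by
      intro i
      have := convexOn_exp.2 (Set.mem_univ (0:ℝ)) (Set.mem_univ t)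
        (by linarith [(hf i).1, (hf i).2] : (0:ℝ) ≤ 1 - f i) (hf i).1 (by ring)
      simp only [smul_eq_mul, mul_zero, zero_add, Real.exp_zero, mul_one] at this
      calc Real.exp (t * f i) = Real.exp ((1 - f i) * 0 + f i * t) := by ring_nf
        _ ≤ (1 - f i) * 1 + f i * Real.exp t := by
            simpa using this
        _ = (1 - f i) + f i * Real.exp t := by ring
    calc ∑ i, q i * Real.exp (t * f i) ≤ ∑ i, q i * ((1 - f i) + f i * Real.exp t) :=
          Finset.sum_le_sum fun i _ => mul_le_mul_of_nonneg_left (hpt i) (hq0 i)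
      _ = (∑ i, q i) - ν + ν * Real.exp t := by
          simp only [mul_add, mul_sub, Finset.sum_add_distrib, Finset.sum_sub_distrib, mul_one,
            ← mul_assoc, ← Finset.sum_mul]
          rfl
      _ = 1 - ν + ν * Real.exp t := by rw [hq1]
  calc ∑ i, q i * Real.exp (t * f i) ≤ 1 - ν + ν * Real.exp t := step1
    _ ≤ Real.exp (ν * t + t^2/2) := one_nu_exp_bound hν0 hν1 ht
    _ = Real.exp (t * ν + t^2/2) := by rw [mul_comm ν t]

end Hoeff

section Blocks
variable {d : ℕ} {P : Matrix (Fin d) (Fin d) ℝ} {f : Fin d → ℝ} {μ δ t : ℝ} {T : ℕ}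

theorem expE_succ (P : Matrix (Fin d) (Fin d) ℝ) (N : ℕ) (w : Fin d → ℝ) (h : ℕ → Fin d → ℝ) :
    expE P (N + 1) w h = expE P N (fun j => ∑ i, w i * h 0 i * P i j) (fun n => h (n + 1)) := rfl

theorem key_step (hP : IsTransMat P) (hf : ∀ i, f i ∈ Set.Icc (0:ℝ) 1)
    (hmix : ∀ i, |(∑ j, (P ^ T) i j * f j) - μ| ≤ δ) (ht : |t| ≤ 1)
    {v : Fin d → ℝ} (hv : ∀ i, 0 ≤ v i) :
    ∑ j, Matrix.vecMul v (P ^ T) j * Real.exp (t * f j)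
      ≤ (∑ i, v i) * Real.exp (t * μ + |t| * δ + t ^ 2 / 2) := by
  have hQ := transMat_pow hP T
  have swap : ∑ j, Matrix.vecMul v (P ^ T) j * Real.exp (t * f j)
      = ∑ i, v i * ∑ j, (P ^ T) i j * Real.exp (t * f j) := by
    simp only [Matrix.vecMul, dotProduct, Finset.sum_mul]
    rw [Finset.sum_comm]
    simp only [Finset.mul_sum, mul_assoc]
  rw [swap, Finset.sum_mul]
  apply Finset.sum_le_sum
  intro i _
  apply mul_le_mul_of_nonneg_left _ (hv i)
  calc ∑ j, (P ^ T) i j * Real.exp (t * f j)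
      ≤ Real.exp (t * (∑ j, (P ^ T) i j * f j) + t ^ 2 / 2) :=
        prob_mgf (fun j => hQ.1 i j) (hQ.2 i) hf ht
    _ ≤ Real.exp (t * μ + |t| * δ + t ^ 2 / 2) := by
        apply Real.exp_le_exp.2
        have h1 : t * (∑ j, (P ^ T) i j * f j) - t * μ ≤ |t| * δ := by
          calc t * (∑ j, (P ^ T) i j * f j) - t * μ
              = t * ((∑ j, (P ^ T) i j * f j) - μ) := by ring
            _ ≤ |t * ((∑ j, (P ^ T) i j * f j) - μ)| := le_abs_self _
            _ = |t| * |(∑ j, (P ^ T) i j * f j) - μ| := abs_mul _ _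
            _ ≤ |t| * δ := mul_le_mul_of_nonneg_left (hmix i) (abs_nonneg t)
        linarith

theorem mgf_block (hP : IsTransMat P) (hf : ∀ i, f i ∈ Set.Icc (0:ℝ) 1)
    (hmix : ∀ i, |(∑ j, (P ^ T) i j * f j) - μ| ≤ δ) (ht : |t| ≤ 1) (hT : 1 ≤ T) :
    ∀ (m R : ℕ) (v : Fin d → ℝ), (∀ i, 0 ≤ v i) → R < T →
    expE P (m * T + R) (Matrix.vecMul v (P ^ T))
        (fun n => if T ∣ n then (fun s => Real.exp (t * f s)) else fun _ => 1)
      ≤ (∑ i, v i) * (Real.exp (t * μ + |t| * δ + t ^ 2 / 2)) ^ (m + 1) := by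
  intro m
  induction m with
  | zero =>
    intro R v hv hR
    rw [zero_mul, zero_add]
    rw [expE_tail_ones hP R _ _ ?ones]
    case ones =>
      intro n h1 h2
      rw [if_neg]
      intro hdvd
      exact absurd (Nat.le_of_dvd (by omega) hdvd) (by omega)
    rw [if_pos (dvd_zero T), pow_one]
    exact key_step hP hf hmix ht hv
  | succ m ih =>
    intro R v hv hR
    have hlen : (m + 1) * T + R = (m * T + R + (T - 1)) + 1 := by
      rw [add_mul, one_mul]; omega
    rw [hlen, expE_succ]
    set w := Matrix.vecMul v (P ^ T) with hw
    have hw0 : ∀ i, 0 ≤ w i := vecMul_nonneg (transMat_pow hP T) hv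
    have h0ef : (fun j => ∑ i, w i * (if T ∣ (0:ℕ) then (fun s => Real.exp (t * f s))
          else fun _ => 1) i * P i j)
        = Matrix.vecMul (fun i => w i * Real.exp (t * f i)) P := by
      funext j
      simp only [if_pos (dvd_zero T), Matrix.vecMul, dotProduct]
    rw [h0ef]
    have hskip := expE_skip (P := P) (T - 1) (m * T + R)
      (Matrix.vecMul (fun i => w i * Real.exp (t * f i)) P)
      (fun n => (if T ∣ (n+1) then (fun s => Real.exp (t * f s)) else fun _ => 1))
      (fun n => if T ∣ n then (fun s => Real.exp (t * f s)) else fun _ => 1) ?shape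
    case shape =>
      intro n
      by_cases hn : n < T - 1
      · rw [if_pos hn, if_neg]
        intro hdvd
        exact absurd (Nat.le_of_dvd (by omega) hdvd) (by omega)
      · rw [if_neg hn]
        have heq : n + 1 = (n - (T - 1)) + T := by omega
        rw [heq]
        simp only [Nat.dvd_add_self_right]
    rw [hskip, Matrix.vecMul_vecMul]
    have hPT : P * (P ^ (T - 1)) = P ^ T := by
      rw [← pow_succ']
      congr 1
      omega
    rw [hPT]
    calc expE P (m * T + R) (Matrix.vecMul (fun i => w i * Real.exp (t * f i)) (P ^ T)) _
        ≤ (∑ i, w i * Real.exp (t * f i))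
            * (Real.exp (t * μ + |t| * δ + t ^ 2 / 2)) ^ (m + 1) :=
          ih R _ (fun i => mul_nonneg (hw0 i) (Real.exp_nonneg _)) hR
      _ ≤ ((∑ i, v i) * Real.exp (t * μ + |t| * δ + t ^ 2 / 2))
            * (Real.exp (t * μ + |t| * δ + t ^ 2 / 2)) ^ (m + 1) := by
          apply mul_le_mul_of_nonneg_right _ (pow_nonneg (Real.exp_nonneg _) _)
          exact key_step hP hf hmix ht hv
      _ = (∑ i, v i) * (Real.exp (t * μ + |t| * δ + t ^ 2 / 2)) ^ (m + 1 + 1) := by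
          rw [pow_succ]; ring

theorem mgf_class (hP : IsTransMat P) (hf : ∀ i, f i ∈ Set.Icc (0:ℝ) 1)
    (hmix : ∀ i, |(∑ j, (P ^ T) i j * f j) - μ| ≤ δ) (ht : |t| ≤ 1) (hT : 1 ≤ T)
    (m R : ℕ) (w : Fin d → ℝ) (hw : ∀ i, 0 ≤ w i) (hR : R < T) :
    expE P (m * T + R) w
        (fun n => if T ∣ n ∧ 0 < n then (fun s => Real.exp (t * f s)) else fun _ => 1)
      ≤ (∑ i, w i) * (Real.exp (t * μ + |t| * δ + t ^ 2 / 2)) ^ m := by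
  cases m with
  | zero =>
    rw [zero_mul, zero_add]
    rw [expE_tail_ones hP R _ _ ?ones]
    case ones =>
      intro n h1 h2
      rw [if_neg]
      rintro ⟨hdvd, hpos⟩
      exact absurd (Nat.le_of_dvd hpos hdvd) (by omega)
    rw [if_neg (by simp), pow_zero, mul_one]
    simp
  | succ m =>
    have hlen : (m + 1) * T + R = (m * T + R) + T := by
      rw [add_mul, one_mul]; omega
    rw [hlen]
    have hskip := expE_skip (P := P) T (m * T + R) w
      (fun n => if T ∣ n ∧ 0 < n then (fun s => Real.exp (t * f s)) else fun _ => 1)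
      (fun n => if T ∣ n then (fun s => Real.exp (t * f s)) else fun _ => 1) ?shape
    case shape =>
      intro n
      by_cases hn : n < T
      · rw [if_pos hn, if_neg]
        rintro ⟨hdvd, hpos⟩
        exact absurd (Nat.le_of_dvd hpos hdvd) (by omega)
      · rw [if_neg hn]
        by_cases hd : T ∣ n
        · rw [if_pos ⟨hd, by omega⟩, if_pos (Nat.dvd_sub hd dvd_rfl)]
        · rw [if_neg (by tauto), if_neg]
          intro hd2
          apply hd
          have : n = (n - T) + T := by omega
          rw [this]
          exact Nat.dvd_add hd2 dvd_rfl
    rw [hskip]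
    exact mgf_block hP hf hmix ht hT m R w hw hR

theorem class_mgf (hP : IsTransMat P) (hf : ∀ i, f i ∈ Set.Icc (0:ℝ) 1)
    (hmix : ∀ i, |(∑ j, (P ^ T) i j * f j) - μ| ≤ δ) (ht : |t| ≤ 1) (hT : 1 ≤ T)
    (T' N M : ℕ) (hTT' : T ≤ T') (hM : N - T' = M * T) (hT'N : T' < N)
    (r : ℕ) (hr1 : 1 ≤ r) (hrT : r ≤ T)
    (π₀ : Fin d → ℝ) (hπ₀ : IsProbVec π₀) :
    expE P N π₀
        (fun n => if T' + r ≤ n ∧ T ∣ (n - (T' + r)) then (fun s => Real.exp (t * f s))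
          else fun _ => 1)
      ≤ (Real.exp (t * μ + |t| * δ + t ^ 2 / 2)) ^ M := by
  obtain ⟨A, hA⟩ : ∃ A, M * T = A := ⟨_, rfl⟩
  rw [hA] at hM
  set k := T' + r - T with hk
  have hNdec : N = (M * T + (T - r)) + k := by rw [hA]; omega
  rw [hNdec]
  have hskip := expE_skip (P := P) k (M * T + (T - r)) π₀
    (fun n => if T' + r ≤ n ∧ T ∣ (n - (T' + r)) then (fun s => Real.exp (t * f s))
      else fun _ => 1)
    (fun n => if T ∣ n ∧ 0 < n then (fun s => Real.exp (t * f s)) else fun _ => 1) ?shape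
  case shape =>
    intro n
    by_cases hn : n < k
    · rw [if_pos hn, if_neg]
      rintro ⟨h1, _⟩
      omega
    · rw [if_neg hn]
      by_cases hc : T' + r ≤ n ∧ T ∣ (n - (T' + r))
      · rw [if_pos hc, if_pos]
        constructor
        · have : n - k = (n - (T' + r)) + T := by omega
          rw [this]
          exact Nat.dvd_add hc.2 dvd_rfl
        · omega
      · rw [if_neg hc, if_neg]
        rintro ⟨hd, hpos⟩
        apply hc
        have hTle : T ≤ n - k := Nat.le_of_dvd hpos hd
        constructor
        · omega
        · have : n - (T' + r) = (n - k) - T := by omega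
          rw [this]
          exact Nat.dvd_sub hd dvd_rfl
  rw [hskip]
  calc expE P (M * T + (T - r)) (Matrix.vecMul π₀ (P ^ k)) _
      ≤ (∑ j, Matrix.vecMul π₀ (P ^ k) j)
          * (Real.exp (t * μ + |t| * δ + t ^ 2 / 2)) ^ M :=
        mgf_class hP hf hmix ht hT M (T - r) _
          (vecMul_nonneg (transMat_pow hP k) hπ₀.1) (by omega)
    _ = (Real.exp (t * μ + |t| * δ + t ^ 2 / 2)) ^ M := by
        rw [sum_vecMul_trans (transMat_pow hP k) π₀, hπ₀.2, one_mul]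

end Blocks

theorem class_partition (T T' : ℕ) (hT : 1 ≤ T) (n : ℕ) (c : ℝ) :
    ∑ r ∈ Finset.Icc 1 T, (if T' + r ≤ n ∧ T ∣ (n - (T' + r)) then c else 0)
      = if T' < n then c else 0 := by
  by_cases h : T' < n
  · rw [if_pos h]
    set r₀ := (n - T' - 1) % T + 1 with hr₀
    have hmod : (n - T' - 1) % T < T := Nat.mod_lt _ (by omega)
    have hmodle : (n - T' - 1) % T ≤ n - T' - 1 := Nat.mod_le _ _
    rw [Finset.sum_eq_single r₀]
    · rw [if_pos]
      constructor
      · omega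
      · have hdm := Nat.div_add_mod (n - T' - 1) T
        have : n - (T' + r₀) = T * ((n - T' - 1) / T) := by omega
        rw [this]
        exact Dvd.intro _ rfl
    · intro b hb hne
      rw [Finset.mem_Icc] at hb
      rw [if_neg]
      rintro ⟨hb1, hb2⟩
      obtain ⟨u, hu⟩ := hb2
      have hD : n - T' - 1 = (b - 1) + T * u := by omega
      have h1 : (n - T' - 1) % T = (b - 1) % T := by
        rw [hD, Nat.add_mul_mod_self_left]
      have h2 : (b - 1) % T = b - 1 := Nat.mod_eq_of_lt (by omega)
      omega
    · intro habs
      exfalso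
      apply habs
      rw [Finset.mem_Icc]
      omega
  · rw [if_neg h]
    apply Finset.sum_eq_zero
    intro r hr
    rw [Finset.mem_Icc] at hr
    rw [if_neg]
    rintro ⟨h1, _⟩
    omega

theorem prod_sched_exp {d N : ℕ} (x : Fin (N+1) → Fin d) (cond : ℕ → Prop)
    [DecidablePred cond] (t : ℝ) (f : Fin d → ℝ) :
    ∏ n : Fin (N+1), (if cond (n : ℕ) then (fun s => Real.exp (t * f s))
        else fun _ => (1:ℝ)) (x n)
      = Real.exp (t * ∑ n : Fin (N+1), (if cond (n : ℕ) then f (x n) else 0)) := by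
  rw [Finset.mul_sum, Real.exp_sum]
  apply Finset.prod_congr rfl
  intro n _
  by_cases hc : cond (n : ℕ)
  · rw [if_pos hc, if_pos hc]
  · rw [if_neg hc, if_neg hc, mul_zero, Real.exp_zero]


section PathHelp
variable {d : ℕ} {P : Matrix (Fin d) (Fin d) ℝ} {π₀ : Fin d → ℝ}

theorem pathMass_nonneg (hP : IsTransMat P) (hπ₀ : IsProbVec π₀) (N : ℕ)
    (x : Fin (N + 1) → Fin d) : 0 ≤ pathMass P π₀ N x :=
  mul_nonneg (hπ₀.1 _) (Finset.prod_nonneg fun n _ => hP.1 _ _)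

theorem pathMass_sum_one (hP : IsTransMat P) (hπ₀ : IsProbVec π₀) (N : ℕ) :
    ∑ x : Fin (N + 1) → Fin d, pathMass P π₀ N x = 1 := by
  have h := expE_path P N π₀ (fun _ _ => 1)
  simp only [Finset.prod_const_one, mul_one] at h
  rw [h, expE_tail_ones hP N π₀ _ (fun n _ _ => rfl)]
  simp only [mul_one]
  exact hπ₀.2

theorem pathProb_eq_one (hP : IsTransMat P) (hπ₀ : IsProbVec π₀) (N : ℕ)
    {E : (Fin (N + 1) → Fin d) → Prop} (hE : ∀ x, E x) :
    pathProb P π₀ N E = 1 := by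
  unfold pathProb
  rw [← pathMass_sum_one hP hπ₀ N]
  exact Finset.sum_congr rfl fun x _ => if_pos (hE x)

theorem pathProb_add_compl (hP : IsTransMat P) (hπ₀ : IsProbVec π₀) (N : ℕ)
    (E : (Fin (N + 1) → Fin d) → Prop) :
    pathProb P π₀ N E + pathProb P π₀ N (fun x => ¬ E x) = 1 := by
  unfold pathProb
  rw [← Finset.sum_add_distrib, ← pathMass_sum_one hP hπ₀ N]
  apply Finset.sum_congr rfl
  intro x _
  by_cases h : E x
  · rw [if_pos h, if_neg (not_not_intro h), add_zero]
  · rw [if_neg h, if_pos h, zero_add]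

theorem ite_nonneg' {c : Prop} [Decidable c] {m : ℝ} (hm : 0 ≤ m) :
    0 ≤ if c then m else 0 := by
  split_ifs
  · exact hm
  · exact le_rfl

theorem pathProb_union_le (hP : IsTransMat P) (hπ₀ : IsProbVec π₀) (N : ℕ)
    (E A B : (Fin (N + 1) → Fin d) → Prop) (h : ∀ x, E x → A x ∨ B x) :
    pathProb P π₀ N E ≤ pathProb P π₀ N A + pathProb P π₀ N B := by
  classical
  unfold pathProb
  rw [← Finset.sum_add_distrib]
  apply Finset.sum_le_sum
  intro x _
  have hm := pathMass_nonneg hP hπ₀ N x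
  by_cases hE : E x
  · rw [if_pos hE]
    rcases h x hE with hA | hB
    · rw [if_pos hA]
      have := ite_nonneg' (c := B x) hm
      linarith
    · rw [if_pos hB]
      have := ite_nonneg' (c := A x) hm
      linarith
  · rw [if_neg hE]
    have h1 := ite_nonneg' (c := A x) hm
    have h2 := ite_nonneg' (c := B x) hm
    linarith

theorem pathProb_le_mgf (hP : IsTransMat P) (hπ₀ : IsProbVec π₀) (N : ℕ)
    (E : (Fin (N + 1) → Fin d) → Prop) (g : (Fin (N + 1) → Fin d) → ℝ) (c : ℝ)
    (h : ∀ x, E x → c ≤ g x) :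
    pathProb P π₀ N E * Real.exp c
      ≤ ∑ x : Fin (N + 1) → Fin d, pathMass P π₀ N x * Real.exp (g x) := by
  unfold pathProb
  rw [Finset.sum_mul]
  apply Finset.sum_le_sum
  intro x _
  have hm := pathMass_nonneg hP hπ₀ N x
  by_cases hE : E x
  · rw [if_pos hE]
    exact mul_le_mul_of_nonneg_left (Real.exp_le_exp.2 (h x hE)) hm
  · rw [if_neg hE, zero_mul]
    positivity

end PathHelp

set_option maxHeartbeats 1600000 in
/-- adaptive confidence interval built from an upper bound on the
`f`-mixing time (Proposition `prop:confidence-adaptive-hoeffding-bdd`). -/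
theorem adaptive_confidence_interval_bdd
    {d : ℕ} (hd : 0 < d)
    (P : Matrix (Fin d) (Fin d) ℝ) (π f : Fin d → ℝ)
    (hP : IsTransMat P) (hirr : IsIrreducibleMat P) (haper : IsAperiodicMat P)
    (hπ : IsStationaryDist P π)
    (hf : ∀ i, f i ∈ Set.Icc (0 : ℝ) 1)
    (μ : ℝ) (hμ : μ = ∑ i, π i * f i)
    (Ttil : ℝ → ℕ)
    (hTtil : ∀ δ : ℝ, 0 < δ → 1 ≤ fMixTime P π f δ ∧ fMixTime P π f δ ≤ Ttil δ)
    (α : ℝ) (hα : α ∈ Set.Ioo (0 : ℝ) 1)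
    (εN : ℝ) (hεN : 0 < εN)
    (N : ℕ)
    (hrate : 8 * Real.log (2 / α) ≤ εN ^ 2 * ((N : ℝ) / (Ttil (εN / 2) : ℝ) - 1))
    (T' : ℕ) (hT' : T' = Ttil (εN / 2)) (hNT' : T' < N)
    (hdvd : fMixTime P π f (εN / 2) ∣ (N - T')) :
    ∀ π₀ : Fin d → ℝ, IsProbVec π₀ →
      1 - α ≤ pathProb P π₀ N (fun x =>
        μ - εN ≤
            (1 / ((N : ℝ) - (T' : ℝ))) * ∑ n : Fin (N + 1), (if T' < (n : ℕ) then f (x n) else 0) ∧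
        (1 / ((N : ℝ) - (T' : ℝ))) * ∑ n : Fin (N + 1), (if T' < (n : ℕ) then f (x n) else 0) ≤
            μ + εN) := by
  intro π₀ hπ₀
  classical
  -- basic setup
  set T : ℕ := fMixTime P π f (εN / 2) with hTdef
  have hδpos : 0 < εN / 2 := by linarith
  obtain ⟨hT1, hTle⟩ := hTtil (εN / 2) hδpos
  have hTT' : T ≤ T' := by rw [hT']; exact hTle
  have hT'1 : 1 ≤ T' := le_trans hT1 hTT'
  obtain ⟨M, hM⟩ := hdvd
  have hM0 : M ≠ 0 := by
    rintro rfl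
    rw [mul_zero] at hM
    omega
  -- mixing property at time T
  have hmemb : T ∈ {n : ℕ | 1 ≤ n ∧ ∀ i, fDisc f (fun j => (P ^ n) i j) π ≤ εN / 2} := by
    rw [hTdef]
    apply Nat.sInf_mem
    by_contra hne
    rw [Set.not_nonempty_iff_eq_empty] at hne
    have h0 : fMixTime P π f (εN / 2) = 0 := by
      unfold fMixTime
      rw [hne]
      exact Nat.sInf_empty
    omega
  have hmix : ∀ i, |(∑ j, (P ^ T) i j * f j) - μ| ≤ εN / 2 := by
    intro i
    have h := hmemb.2 i
    unfold fDisc at h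
    rw [hμ]
    exact h
  -- bounds on μ
  have hμ0 : 0 ≤ μ := by
    rw [hμ]
    exact Finset.sum_nonneg fun i _ => mul_nonneg (hπ.1 i).le (hf i).1
  have hμ1 : μ ≤ 1 := by
    rw [hμ]
    calc ∑ i, π i * f i ≤ ∑ i, π i :=
          Finset.sum_le_sum fun i _ => by nlinarith [(hf i).2, (hπ.1 i).le]
      _ = 1 := hπ.2.1
  have hNT'R : (T' : ℝ) < (N : ℝ) := by exact_mod_cast hNT'
  have hden : (0:ℝ) < (N : ℝ) - (T' : ℝ) := by linarith
  have hdenne : (N : ℝ) - (T' : ℝ) ≠ 0 := ne_of_gt hden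
  -- counting
  have hcount : ∑ n : Fin (N + 1), (if T' < (n : ℕ) then (1:ℝ) else 0) = (N : ℝ) - (T' : ℝ) := by
    rw [Fin.sum_univ_eq_sum_range (fun n => if T' < n then (1:ℝ) else 0) (N + 1)]
    rw [Finset.sum_boole]
    have hfe : (Finset.range (N + 1)).filter (fun n => T' < n) = Finset.Ico (T' + 1) (N + 1) := by
      ext a
      simp only [Finset.mem_filter, Finset.mem_range, Finset.mem_Ico]
      omega
    rw [hfe, Nat.card_Ico]
    have hsub : N + 1 - (T' + 1) = N - T' := by omega
    rw [hsub, Nat.cast_sub hNT'.le]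
  have hS0 : ∀ x : Fin (N + 1) → Fin d,
      0 ≤ ∑ n : Fin (N + 1), (if T' < (n : ℕ) then f (x n) else 0) := by
    intro x
    apply Finset.sum_nonneg
    intro n _
    exact ite_nonneg' (hf _).1
  have hS1 : ∀ x : Fin (N + 1) → Fin d,
      (∑ n : Fin (N + 1), (if T' < (n : ℕ) then f (x n) else 0)) ≤ (N : ℝ) - (T' : ℝ) := by
    intro x
    rw [← hcount]
    apply Finset.sum_le_sum
    intro n _
    by_cases hc : T' < (n : ℕ)
    · rw [if_pos hc, if_pos hc]
      exact (hf _).2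
    · rw [if_neg hc, if_neg hc]
  by_cases hbig : 1 ≤ εN
  · -- trivial case: the interval has full width
    rw [pathProb_eq_one hP hπ₀ N]
    · linarith [hα.1]
    · intro x
      constructor
      · have h1 : 0 ≤ (1 / ((N:ℝ) - (T':ℝ))) * ∑ n : Fin (N+1), (if T' < (n:ℕ) then f (x n) else 0) :=
          mul_nonneg (by positivity) (hS0 x)
        linarith
      · have h2 : (1 / ((N:ℝ) - (T':ℝ))) * ∑ n : Fin (N+1), (if T' < (n:ℕ) then f (x n) else 0) ≤ 1 := by
          rw [mul_comm, ← le_div_iff₀ (by positivity)]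
          calc (∑ n : Fin (N+1), (if T' < (n:ℕ) then f (x n) else 0)) ≤ (N:ℝ) - (T':ℝ) := hS1 x
            _ = 1 / (1 / ((N:ℝ) - (T':ℝ))) := by field_simp
        linarith
  · -- main case
    push_neg at hbig
    have hTposR : (0:ℝ) < (T : ℝ) := by exact_mod_cast hT1
    have hTne : (T : ℝ) ≠ 0 := ne_of_gt hTposR
    have hMT : (N : ℝ) - (T' : ℝ) = (M : ℝ) * (T : ℝ) := by
      have h1 : ((N - T' : ℕ) : ℝ) = ((T * M : ℕ) : ℝ) := by rw [hM]
      rw [Nat.cast_sub hNT'.le, Nat.cast_mul] at h1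
      rw [h1]
      ring
    -- the per-class mgf bound
    have hclass : ∀ s : ℝ, |s| ≤ 1 → ∀ r, 1 ≤ r → r ≤ T →
        ∑ x : Fin (N + 1) → Fin d, pathMass P π₀ N x *
          Real.exp (s * ∑ n : Fin (N + 1),
            (if T' + r ≤ (n : ℕ) ∧ T ∣ ((n : ℕ) - (T' + r)) then f (x n) else 0))
        ≤ (Real.exp (s * μ + |s| * (εN / 2) + s ^ 2 / 2)) ^ M := by
      intro s hs r hr1 hrT
      have heq : ∀ x : Fin (N + 1) → Fin d,
          Real.exp (s * ∑ n : Fin (N + 1),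
            (if T' + r ≤ (n : ℕ) ∧ T ∣ ((n : ℕ) - (T' + r)) then f (x n) else 0))
          = ∏ n : Fin (N + 1),
              (if T' + r ≤ (n : ℕ) ∧ T ∣ ((n : ℕ) - (T' + r))
                then (fun u => Real.exp (s * f u)) else fun _ => (1:ℝ)) (x n) := by
        intro x
        exact (prod_sched_exp x (fun n => T' + r ≤ n ∧ T ∣ (n - (T' + r))) s f).symm
      calc ∑ x : Fin (N + 1) → Fin d, pathMass P π₀ N x *
            Real.exp (s * ∑ n : Fin (N + 1),
              (if T' + r ≤ (n : ℕ) ∧ T ∣ ((n : ℕ) - (T' + r)) then f (x n) else 0))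
          = ∑ x : Fin (N + 1) → Fin d, pathMass P π₀ N x *
              ∏ n : Fin (N + 1),
                (if T' + r ≤ (n : ℕ) ∧ T ∣ ((n : ℕ) - (T' + r))
                  then (fun u => Real.exp (s * f u)) else fun _ => (1:ℝ)) (x n) := by
            apply Finset.sum_congr rfl
            intro x _
            rw [heq x]
        _ = expE P N π₀ (fun n => if T' + r ≤ n ∧ T ∣ (n - (T' + r))
              then (fun u => Real.exp (s * f u)) else fun _ => (1:ℝ)) :=
            expE_path P N π₀ (fun n => if T' + r ≤ n ∧ T ∣ (n - (T' + r))
              then (fun u => Real.exp (s * f u)) else fun _ => (1:ℝ))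
        _ ≤ (Real.exp (s * μ + |s| * (εN / 2) + s ^ 2 / 2)) ^ M :=
            class_mgf hP hf hmix hs hT1 T' N M hTT' (by rw [hM]; ring) hNT' r hr1 hrT π₀ hπ₀
    -- Jensen step
    have hjensen : ∀ s : ℝ, |s| ≤ 1 →
        ∑ x : Fin (N + 1) → Fin d, pathMass P π₀ N x *
          Real.exp ((s / (T : ℝ)) * ∑ n : Fin (N + 1), (if T' < (n : ℕ) then f (x n) else 0))
        ≤ (Real.exp (s * μ + |s| * (εN / 2) + s ^ 2 / 2)) ^ M := by
      intro s hs
      have hSsplit : ∀ x : Fin (N + 1) → Fin d,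
          (∑ n : Fin (N + 1), (if T' < (n : ℕ) then f (x n) else 0))
          = ∑ r ∈ Finset.Icc 1 T, ∑ n : Fin (N + 1),
              (if T' + r ≤ (n : ℕ) ∧ T ∣ ((n : ℕ) - (T' + r)) then f (x n) else 0) := by
        intro x
        rw [Finset.sum_comm]
        apply Finset.sum_congr rfl
        intro n _
        exact (class_partition T T' hT1 (n : ℕ) (f (x n))).symm
      have hpt : ∀ x : Fin (N + 1) → Fin d,
          Real.exp ((s / (T : ℝ)) * ∑ n : Fin (N + 1), (if T' < (n : ℕ) then f (x n) else 0))
          ≤ ∑ r ∈ Finset.Icc 1 T, (1 / (T : ℝ)) *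
              Real.exp (s * ∑ n : Fin (N + 1),
                (if T' + r ≤ (n : ℕ) ∧ T ∣ ((n : ℕ) - (T' + r)) then f (x n) else 0)) := by
        intro x
        have hcard : ∑ _r ∈ Finset.Icc 1 T, (1 / (T : ℝ)) = 1 := by
          rw [Finset.sum_const, Nat.card_Icc]
          simp only [Nat.add_sub_cancel, nsmul_eq_mul]
          field_simp
        have hconv := convexOn_exp.map_sum_le (t := Finset.Icc 1 T)
          (w := fun _ => 1 / (T : ℝ))
          (p := fun r => s * ∑ n : Fin (N + 1),
            (if T' + r ≤ (n : ℕ) ∧ T ∣ ((n : ℕ) - (T' + r)) then f (x n) else 0))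
          (fun r _ => by positivity) hcard (fun r _ => Set.mem_univ _)
        simp only [smul_eq_mul] at hconv
        have harg : (∑ r ∈ Finset.Icc 1 T, (1 / (T : ℝ)) *
              (s * ∑ n : Fin (N + 1),
                (if T' + r ≤ (n : ℕ) ∧ T ∣ ((n : ℕ) - (T' + r)) then f (x n) else 0)))
            = (s / (T : ℝ)) * ∑ n : Fin (N + 1), (if T' < (n : ℕ) then f (x n) else 0) := by
          rw [hSsplit x, Finset.mul_sum]
          apply Finset.sum_congr rfl
          intro r _
          ring
        rw [harg] at hconv
        exact hconv
      calc ∑ x : Fin (N + 1) → Fin d, pathMass P π₀ N x *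
            Real.exp ((s / (T : ℝ)) * ∑ n : Fin (N + 1), (if T' < (n : ℕ) then f (x n) else 0))
          ≤ ∑ x : Fin (N + 1) → Fin d, pathMass P π₀ N x *
              (∑ r ∈ Finset.Icc 1 T, (1 / (T : ℝ)) *
                Real.exp (s * ∑ n : Fin (N + 1),
                  (if T' + r ≤ (n : ℕ) ∧ T ∣ ((n : ℕ) - (T' + r)) then f (x n) else 0))) := by
            apply Finset.sum_le_sum
            intro x _
            exact mul_le_mul_of_nonneg_left (hpt x) (pathMass_nonneg hP hπ₀ N x)
        _ = ∑ r ∈ Finset.Icc 1 T, (1 / (T : ℝ)) *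
              ∑ x : Fin (N + 1) → Fin d, pathMass P π₀ N x *
                Real.exp (s * ∑ n : Fin (N + 1),
                  (if T' + r ≤ (n : ℕ) ∧ T ∣ ((n : ℕ) - (T' + r)) then f (x n) else 0)) := by
            simp only [Finset.mul_sum]
            rw [Finset.sum_comm]
            apply Finset.sum_congr rfl
            intro r _
            apply Finset.sum_congr rfl
            intro x _
            ring
        _ ≤ ∑ r ∈ Finset.Icc 1 T, (1 / (T : ℝ)) *
              (Real.exp (s * μ + |s| * (εN / 2) + s ^ 2 / 2)) ^ M := by
            apply Finset.sum_le_sum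
            intro r hr
            rw [Finset.mem_Icc] at hr
            exact mul_le_mul_of_nonneg_left (hclass s hs r hr.1 hr.2) (by positivity)
        _ = (Real.exp (s * μ + |s| * (εN / 2) + s ^ 2 / 2)) ^ M := by
            rw [Finset.sum_const, Nat.card_Icc]
            simp only [Nat.add_sub_cancel, nsmul_eq_mul]
            field_simp
    -- the log-rate bound
    have hlog : Real.log (2 / α) ≤ (M : ℝ) * εN ^ 2 / 8 := by
      have hT'pos : (0:ℝ) < (T' : ℝ) := by exact_mod_cast hT'1
      have hTleR : (T : ℝ) ≤ (T' : ℝ) := by exact_mod_cast hTT'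
      have hMge : (N : ℝ) / (T' : ℝ) - 1 ≤ (M : ℝ) := by
        rw [div_sub_one (ne_of_gt hT'pos), div_le_iff₀ hT'pos]
        have hMnn : (0:ℝ) ≤ (M : ℝ) := Nat.cast_nonneg M
        nlinarith [hMT]
      rw [← hT'] at hrate
      have h2 : εN ^ 2 * ((N : ℝ) / (T' : ℝ) - 1) ≤ εN ^ 2 * (M : ℝ) :=
        mul_le_mul_of_nonneg_left hMge (by positivity)
      nlinarith
    have h2α : (0:ℝ) < 2 / α := by
      have := hα.1
      positivity
    have hexpb : Real.exp (-((M : ℝ) * εN ^ 2 / 8)) ≤ α / 2 := by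
      calc Real.exp (-((M : ℝ) * εN ^ 2 / 8)) ≤ Real.exp (-Real.log (2 / α)) :=
            Real.exp_le_exp.2 (neg_le_neg hlog)
        _ = α / 2 := by
            rw [Real.exp_neg, Real.exp_log h2α, inv_div]
    set t : ℝ := εN / 2 with htdef
    have ht0 : 0 < t := hδpos
    have htabs : |t| ≤ 1 := by
      rw [abs_of_nonneg ht0.le]
      linarith
    have htabs' : |(-t)| ≤ 1 := by rwa [abs_neg]
    -- upper tail
    have hup : pathProb P π₀ N (fun x =>
        (μ + εN) * ((N : ℝ) - (T' : ℝ)) <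
          ∑ n : Fin (N + 1), (if T' < (n : ℕ) then f (x n) else 0)) ≤ α / 2 := by
      have hmark := pathProb_le_mgf hP hπ₀ N
        (fun x => (μ + εN) * ((N : ℝ) - (T' : ℝ)) <
          ∑ n : Fin (N + 1), (if T' < (n : ℕ) then f (x n) else 0))
        (fun x => (t / (T : ℝ)) * ∑ n : Fin (N + 1), (if T' < (n : ℕ) then f (x n) else 0))
        ((t / (T : ℝ)) * ((μ + εN) * ((N : ℝ) - (T' : ℝ))))
        (fun x hx => mul_le_mul_of_nonneg_left hx.le (by positivity))
      have hj := hjensen t htabs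
      have hchain : pathProb P π₀ N (fun x =>
          (μ + εN) * ((N : ℝ) - (T' : ℝ)) <
            ∑ n : Fin (N + 1), (if T' < (n : ℕ) then f (x n) else 0))
          * Real.exp ((t / (T : ℝ)) * ((μ + εN) * ((N : ℝ) - (T' : ℝ))))
          ≤ (Real.exp (t * μ + |t| * (εN / 2) + t ^ 2 / 2)) ^ M := le_trans hmark hj
      have hkey : (Real.exp (t * μ + |t| * (εN / 2) + t ^ 2 / 2)) ^ M
          * (Real.exp ((t / (T : ℝ)) * ((μ + εN) * ((N : ℝ) - (T' : ℝ)))))⁻¹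
          = Real.exp (-((M : ℝ) * εN ^ 2 / 8)) := by
        rw [← Real.exp_nat_mul, ← Real.exp_neg, ← Real.exp_add]
        congr 1
        rw [abs_of_nonneg ht0.le, hMT, htdef]
        field_simp
        ring
      calc pathProb P π₀ N (fun x =>
            (μ + εN) * ((N : ℝ) - (T' : ℝ)) <
              ∑ n : Fin (N + 1), (if T' < (n : ℕ) then f (x n) else 0))
          = (pathProb P π₀ N _ * Real.exp ((t / (T : ℝ)) * ((μ + εN) * ((N : ℝ) - (T' : ℝ)))))
              * (Real.exp ((t / (T : ℝ)) * ((μ + εN) * ((N : ℝ) - (T' : ℝ)))))⁻¹ := by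
            rw [mul_assoc, mul_inv_cancel₀ (Real.exp_ne_zero _), mul_one]
        _ ≤ (Real.exp (t * μ + |t| * (εN / 2) + t ^ 2 / 2)) ^ M
              * (Real.exp ((t / (T : ℝ)) * ((μ + εN) * ((N : ℝ) - (T' : ℝ)))))⁻¹ :=
            mul_le_mul_of_nonneg_right hchain (by positivity)
        _ = Real.exp (-((M : ℝ) * εN ^ 2 / 8)) := hkey
        _ ≤ α / 2 := hexpb
    -- lower tail
    have hdown : pathProb P π₀ N (fun x =>
        (∑ n : Fin (N + 1), (if T' < (n : ℕ) then f (x n) else 0)) <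
          (μ - εN) * ((N : ℝ) - (T' : ℝ))) ≤ α / 2 := by
      have hmark := pathProb_le_mgf hP hπ₀ N
        (fun x => (∑ n : Fin (N + 1), (if T' < (n : ℕ) then f (x n) else 0)) <
          (μ - εN) * ((N : ℝ) - (T' : ℝ)))
        (fun x => ((-t) / (T : ℝ)) * ∑ n : Fin (N + 1), (if T' < (n : ℕ) then f (x n) else 0))
        (((-t) / (T : ℝ)) * ((μ - εN) * ((N : ℝ) - (T' : ℝ))))
        (fun x hx => by
          apply mul_le_mul_of_nonpos_left hx.le
          apply div_nonpos_of_nonpos_of_nonneg <;> [linarith; positivity])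
      have hj := hjensen (-t) htabs'
      have hchain := le_trans hmark hj
      have hkey : (Real.exp ((-t) * μ + |(-t)| * (εN / 2) + (-t) ^ 2 / 2)) ^ M
          * (Real.exp (((-t) / (T : ℝ)) * ((μ - εN) * ((N : ℝ) - (T' : ℝ)))))⁻¹
          = Real.exp (-((M : ℝ) * εN ^ 2 / 8)) := by
        rw [← Real.exp_nat_mul, ← Real.exp_neg, ← Real.exp_add]
        congr 1
        rw [abs_neg, abs_of_nonneg ht0.le, hMT, htdef]
        field_simp
        ring
      calc pathProb P π₀ N (fun x =>
            (∑ n : Fin (N + 1), (if T' < (n : ℕ) then f (x n) else 0)) <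
              (μ - εN) * ((N : ℝ) - (T' : ℝ)))
          = (pathProb P π₀ N _ * Real.exp (((-t) / (T : ℝ)) * ((μ - εN) * ((N : ℝ) - (T' : ℝ)))))
              * (Real.exp (((-t) / (T : ℝ)) * ((μ - εN) * ((N : ℝ) - (T' : ℝ)))))⁻¹ := by
            rw [mul_assoc, mul_inv_cancel₀ (Real.exp_ne_zero _), mul_one]
        _ ≤ (Real.exp ((-t) * μ + |(-t)| * (εN / 2) + (-t) ^ 2 / 2)) ^ M
              * (Real.exp (((-t) / (T : ℝ)) * ((μ - εN) * ((N : ℝ) - (T' : ℝ)))))⁻¹ :=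
            mul_le_mul_of_nonneg_right hchain (by positivity)
        _ = Real.exp (-((M : ℝ) * εN ^ 2 / 8)) := hkey
        _ ≤ α / 2 := hexpb
    -- assemble
    have hcompl := pathProb_add_compl hP hπ₀ N (fun x =>
        μ - εN ≤
            (1 / ((N : ℝ) - (T' : ℝ))) * ∑ n : Fin (N + 1), (if T' < (n : ℕ) then f (x n) else 0) ∧
        (1 / ((N : ℝ) - (T' : ℝ))) * ∑ n : Fin (N + 1), (if T' < (n : ℕ) then f (x n) else 0) ≤
            μ + εN)
    have hunion := pathProb_union_le hP hπ₀ N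
      (fun x => ¬ (μ - εN ≤
            (1 / ((N : ℝ) - (T' : ℝ))) * ∑ n : Fin (N + 1), (if T' < (n : ℕ) then f (x n) else 0) ∧
        (1 / ((N : ℝ) - (T' : ℝ))) * ∑ n : Fin (N + 1), (if T' < (n : ℕ) then f (x n) else 0) ≤
            μ + εN))
      (fun x => (μ + εN) * ((N : ℝ) - (T' : ℝ)) <
          ∑ n : Fin (N + 1), (if T' < (n : ℕ) then f (x n) else 0))
      (fun x => (∑ n : Fin (N + 1), (if T' < (n : ℕ) then f (x n) else 0)) <
          (μ - εN) * ((N : ℝ) - (T' : ℝ)))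
      (by
        intro x hx
        rw [not_and_or] at hx
        have hinv : ((N : ℝ) - (T' : ℝ)) * (1 / ((N : ℝ) - (T' : ℝ))) = 1 :=
          mul_one_div_cancel hdenne
        rcases hx with hx | hx
        · push_neg at hx
          right
          have h1 := mul_lt_mul_of_pos_left hx hden
          rw [← mul_assoc, hinv, one_mul] at h1
          linarith
        · push_neg at hx
          left
          have h1 := mul_lt_mul_of_pos_left hx hden
          rw [← mul_assoc, hinv, one_mul] at h1
          linarith)
    linarith
end Aux
end
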